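/- arXiv:2506.04644 — 7 statements merged into one kernel-verified Lean document; each statement's English description precedes it below -/
import Mathlib

section
/- For the function f : ℝ → ℝ defined by f(x) = x·sin(1/x) for x ≠ 0 and f(0) = 0, the point x = 0 is a sink of f but not a local minimum of f. -/
/-!
A continuous path from `0` has an interval as its image, so if it ever leaves `0` it sweeps
over the whole interval between `0` and some `y ≠ 0`. Every such interval contains a point `x`
with `sin (1 / x) = ±1` making `f x = |x| > 0`, which the path is forbidden to visit; hence the
path is constant. Points with `f x = -|x| < 0` accumulate at `0` just as well, so `0` is not a
local minimum.
-/

/-- `x` is a sink of `f`: every continuous path starting at `x` along which `f` stays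
`≤ f x` makes `f` constant along the path. -/
def IsSink {X : Type*} [TopologicalSpace X] (f : X → ℝ) (x : X) : Prop :=
  ∀ γ : C(unitInterval, X), γ 0 = x → (∀ t, f (γ t) ≤ f x) →
    ∀ s t, f (γ s) = f (γ t)

open Real Set

theorem isSink_of_forall_exists_mem_uIcc_lt {α : Type*} [LinearOrder α] [TopologicalSpace α]
    [OrderClosedTopology α] {f : α → ℝ} {x : α}
    (h : ∀ y ≠ x, ∃ z ∈ uIcc x y, f x < f z) : IsSink f x := by
  intro γ hγ0 hle
  have hconn : (range γ).OrdConnected := (isPreconnected_range γ.continuous).ordConnected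
  have hγ : ∀ u, γ u = x := by
    intro u
    by_contra hu
    obtain ⟨z, hz, hlt⟩ := h (γ u) hu
    obtain ⟨v, rfl⟩ := hconn.uIcc_subset ⟨0, hγ0⟩ ⟨u, rfl⟩ hz
    exact (hle v).not_gt hlt
  intro s t
  rw [hγ s, hγ t]

theorem exists_mem_Ioo_sin_one_div_eq (b : ℝ) {δ : ℝ} (hδ : 0 < δ) :
    ∃ x ∈ Ioo 0 δ, sin (1 / x) = sin b := by
  obtain ⟨n, hn⟩ := exists_nat_gt (max (1 / δ) (-b))
  rw [max_lt_iff] at hn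
  have hlarge : 1 / δ < b + n * (2 * π) := by
    nlinarith [pi_gt_three, n.cast_nonneg (α := ℝ)]
  have hpos : 0 < b + n * (2 * π) := (one_div_pos.2 hδ).trans hlarge
  exact ⟨1 / (b + n * (2 * π)), ⟨by positivity, (one_div_lt hpos hδ).2 hlarge⟩, by
    rw [one_div_one_div, sin_add_nat_mul_two_pi]⟩

noncomputable def xSinInv (x : ℝ) : ℝ :=
  if x = 0 then 0 else x * sin (1 / x)

theorem xSinInv_zero : xSinInv 0 = 0 := if_pos rfl

theorem xSinInv_of_ne_zero {x : ℝ} (hx : x ≠ 0) : xSinInv x = x * sin (1 / x) := if_neg hx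

theorem xSinInv_neg (x : ℝ) : xSinInv (-x) = xSinInv x := by
  rcases eq_or_ne x 0 with rfl | hx
  · rw [neg_zero]
  · rw [xSinInv_of_ne_zero hx, xSinInv_of_ne_zero (neg_ne_zero.2 hx), one_div_neg_eq_neg_one_div,
      sin_neg, neg_mul_neg]

theorem exists_mem_Ioo_xSinInv_eq (b : ℝ) {δ : ℝ} (hδ : 0 < δ) :
    ∃ x ∈ Ioo 0 δ, xSinInv x = x * sin b := by
  obtain ⟨x, hx, hsin⟩ := exists_mem_Ioo_sin_one_div_eq b hδ
  exact ⟨x, hx, by rw [xSinInv_of_ne_zero hx.1.ne', hsin]⟩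

theorem isSink_xSinInv_zero : IsSink xSinInv 0 := by
  refine isSink_of_forall_exists_mem_uIcc_lt fun y hy => ?_
  obtain ⟨x, ⟨hx, hxy⟩, hfx⟩ := exists_mem_Ioo_xSinInv_eq (π / 2) (abs_pos.2 hy)
  have hfx_pos : xSinInv 0 < xSinInv x := by
    rwa [xSinInv_zero, hfx, sin_pi_div_two, mul_one]
  rcases hy.lt_or_gt with hy_neg | hy_pos
  · rw [abs_of_neg hy_neg] at hxy
    exact ⟨-x, by rw [uIcc_of_ge hy_neg.le]; constructor <;> linarith, by rwa [xSinInv_neg]⟩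
  · rw [abs_of_pos hy_pos] at hxy
    exact ⟨x, by rw [uIcc_of_le hy_pos.le]; constructor <;> linarith, hfx_pos⟩

theorem not_isLocalMin_xSinInv_zero : ¬ IsLocalMin xSinInv 0 := fun hmin => by
  obtain ⟨ε, hε, hball⟩ := Metric.eventually_nhds_iff.1 hmin
  obtain ⟨x, ⟨hx, hxε⟩, hfx⟩ := exists_mem_Ioo_xSinInv_eq (-(π / 2)) hε
  have hfx_neg : xSinInv x < xSinInv 0 := by
    rw [xSinInv_zero, hfx, sin_neg, sin_pi_div_two]
    linarith
  exact hfx_neg.not_ge (hball (by rwa [Real.dist_0_eq_abs, abs_of_pos hx]))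

/-- For `f x = x sin (1/x)` (with `f 0 = 0`), the point `0` is a sink of `f`
but not a local minimum of `f`. -/
theorem x_sin_one_over_x_sink_not_local_min :
    IsSink (fun x : ℝ => if x = 0 then 0 else x * Real.sin (1 / x)) 0 ∧
    ¬ ∃ ε > (0:ℝ), ∀ y : ℝ, |y - 0| < ε →
        (fun x : ℝ => if x = 0 then 0 else x * Real.sin (1 / x)) 0 ≤
          (fun x : ℝ => if x = 0 then 0 else x * Real.sin (1 / x)) y := by
  refine ⟨isSink_xSinInv_zero, fun ⟨ε, hε, hmin⟩ => not_isLocalMin_xSinInv_zero ?_⟩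
  exact Metric.eventually_nhds_iff.2 ⟨ε, hε, fun y hy => hmin y (by rwa [← Real.dist_eq])⟩
end

section
/- Let K, L ⊆ [0,1]² be closed sets with K ∪ L = [0,1]². Suppose {0} × [0,1] ⊆ K, {1} × [0,1] ⊆ K, [0,1] × {0} ⊆ L, and [0,1] × {1} ⊆ L. Then either the left edge {0} × [0,1] and the right edge {1} × [0,1] lie in the same connected component of K, or the bottom edge [0,1] × {0} and the top edge [0,1] × {1} lie in the same connected component of L. -/
/-!
If neither pair of edges is joined, the components of the compact sets `K` and `L` split them into
disjoint compact pieces `A ⊇` left edge, `B ⊇` right edge, `C ⊇` bottom edge and `D ⊇` top edge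
(in a compact Hausdorff space a component is the intersection of its clopen neighbourhoods).
Label the points of a fine grid by `0, 1, 2, 3 : ZMod 4` according as they lie in `A, C, B, D`.
Since `A, B` and `C, D` are at positive distance, labels of neighbouring grid points never differ
by `2`, so every row has a winding number: the sum of its steps lifted to `{-1, 0, 1}`. Crossing a
grid cell does not change it, yet it is `2` on the bottom row, which avoids `D`, and `-2` on the top
row, which avoids `C`.
-/

namespace DiskSeparation

section Winding

open Finset

lemma valMinAbs_sub_add_valMinAbs_sub :
    ∀ a b c : ZMod 4, b - a ≠ 2 → c - b ≠ 2 → c - a ≠ 2 →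
      (b - a).valMinAbs + (c - b).valMinAbs = (c - a).valMinAbs := by
  decide

lemma abs_valMinAbs_le_one : ∀ x : ZMod 4, x ≠ 2 → |x.valMinAbs| ≤ 1 := by
  decide

lemma valMinAbs_neg_of_ne_two : ∀ x : ZMod 4, x ≠ 2 → (-x).valMinAbs = -x.valMinAbs := by
  decide

def winding (g : ℕ → ZMod 4) (n : ℕ) : ℤ :=
  ∑ i ∈ range n, (g (i + 1) - g i).valMinAbs

lemma intCast_winding (g : ℕ → ZMod 4) (n : ℕ) : (winding g n : ZMod 4) = g n - g 0 := by
  simp only [winding, Int.cast_sum, ZMod.coe_valMinAbs, sum_range_sub]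

lemma winding_succ (g : ℕ → ZMod 4) (n : ℕ) :
    winding g (n + 1) = winding g n + (g (n + 1) - g n).valMinAbs :=
  sum_range_succ _ _

lemma winding_neg {g : ℕ → ZMod 4} {n : ℕ} (hg : ∀ i < n, g (i + 1) - g i ≠ 2) :
    winding (-g) n = -winding g n := by
  simp only [winding, ← sum_neg_distrib]
  refine sum_congr rfl fun i hi => ?_
  rw [Pi.neg_apply, Pi.neg_apply, neg_sub_neg, ← neg_sub,
    valMinAbs_neg_of_ne_two _ (hg i (mem_range.1 hi))]

lemma winding_eq_two {g : ℕ → ZMod 4} {n : ℕ} (h0 : g 0 = 0) (hn : g n = 2)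
    (hg : ∀ i < n, g (i + 1) - g i ≠ 2) (h3 : ∀ i ≤ n, g i ≠ 3) : winding g n = 2 := by
  have hbound : ∀ k ≤ n, 0 ≤ winding g k ∧ winding g k ≤ 2 := by
    intro k hk
    induction k with
    | zero => simp [winding]
    | succ k ih =>
      obtain ⟨hlo, hhi⟩ := ih (by omega)
      have hstep := abs_le.1 (abs_valMinAbs_le_one _ (hg k (by omega)))
      have hcast := intCast_winding g (k + 1)
      rw [h0, sub_zero] at hcast
      have hne : winding g (k + 1) ≠ -1 ∧ winding g (k + 1) ≠ 3 := by
        constructor <;> intro h <;> exact h3 (k + 1) hk (by rw [← hcast, h]; decide)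
      rw [winding_succ] at hne ⊢
      omega
  have hdvd : ((4 : ℕ) : ℤ) ∣ winding g n - 2 := by
    rw [← ZMod.intCast_zmod_eq_zero_iff_dvd, Int.cast_sub, intCast_winding, h0, hn]
    decide
  have := hbound n le_rfl
  omega

lemma winding_eq_neg_two {g : ℕ → ZMod 4} {n : ℕ} (h0 : g 0 = 0) (hn : g n = 2)
    (hg : ∀ i < n, g (i + 1) - g i ≠ 2) (h1 : ∀ i ≤ n, g i ≠ 1) : winding g n = -2 := by
  have hneg : winding (-g) n = 2 := by
    refine winding_eq_two (by simp [h0]) (by simp [hn]; decide) (fun i hi => ?_) (fun i hi => ?_)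
    · rw [Pi.neg_apply, Pi.neg_apply, neg_sub_neg, ← neg_sub]
      exact fun h => hg i hi (by rw [← neg_neg (g (i + 1) - g i), h]; decide)
    · rw [Pi.neg_apply]
      exact fun h => h1 i hi (by rw [← neg_neg (g i), h]; decide)
  rw [winding_neg hg] at hneg
  omega

lemma winding_eq_of_adjacent {g h : ℕ → ZMod 4} {n : ℕ}
    (hg : ∀ i < n, g (i + 1) - g i ≠ 2) (hh : ∀ i < n, h (i + 1) - h i ≠ 2)
    (hgh : ∀ i ≤ n, h i - g i ≠ 2) (hdiag : ∀ i < n, h (i + 1) - g i ≠ 2)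
    (h0 : h 0 = g 0) (hn : h n = g n) : winding h n = winding g n := by
  set V : ℕ → ℤ := fun i => (h i - g i).valMinAbs
  have hcell : ∀ i ∈ range n,
      (h (i + 1) - h i).valMinAbs = (g (i + 1) - g i).valMinAbs + (V (i + 1) - V i) := by
    intro i hi
    rw [mem_range] at hi
    have hlower := valMinAbs_sub_add_valMinAbs_sub (g i) (g (i + 1)) (h (i + 1))
      (hg i hi) (hgh (i + 1) hi) (hdiag i hi)
    have hupper := valMinAbs_sub_add_valMinAbs_sub (g i) (h i) (h (i + 1))
      (hgh i hi.le) (hh i hi) (hdiag i hi)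
    simp only [V]
    linarith
  rw [winding, sum_congr rfl hcell, sum_add_distrib, sum_range_sub]
  simp [V, winding, h0, hn]

theorem false_of_grid_labelling {f : ℕ → ℕ → ZMod 4} {m n : ℕ}
    (hleft : ∀ j ≤ n, f 0 j = 0) (hright : ∀ j ≤ n, f m j = 2)
    (hbot : ∀ i ≤ m, f i 0 ≠ 3) (htop : ∀ i ≤ m, f i n ≠ 1)
    (hx : ∀ i < m, ∀ j ≤ n, f (i + 1) j - f i j ≠ 2)
    (hy : ∀ i ≤ m, ∀ j < n, f i (j + 1) - f i j ≠ 2)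
    (hxy : ∀ i < m, ∀ j < n, f (i + 1) (j + 1) - f i j ≠ 2) : False := by
  have hrow : ∀ j ≤ n, winding (f · j) m = winding (f · 0) m := by
    intro j hj
    induction j with
    | zero => rfl
    | succ j ih =>
      rw [← ih (by omega)]
      exact winding_eq_of_adjacent (fun i hi => hx i hi j (by omega))
        (fun i hi => hx i hi (j + 1) hj) (fun i hi => hy i hi j hj)
        (fun i hi => hxy i hi j hj) (by rw [hleft _ hj, hleft _ (by omega)])
        (by rw [hright _ hj, hright _ (by omega)])
  have hbottom : winding (f · 0) m = 2 :=
    winding_eq_two (hleft 0 (Nat.zero_le _)) (hright 0 (Nat.zero_le _))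
      (fun i hi => hx i hi 0 (Nat.zero_le _)) hbot
  have htop : winding (f · n) m = -2 :=
    winding_eq_neg_two (hleft n le_rfl) (hright n le_rfl) (fun i hi => hx i hi n le_rfl) htop
  have := hrow n le_rfl
  omega

end Winding

open Set

section Separation

variable {X : Type*} [TopologicalSpace X] [T2Space X]

theorem exists_isClopen_of_disjoint_connectedComponent [CompactSpace X] {E : Set X}
    (hE : IsClosed E) {x : X} (hxE : Disjoint (connectedComponent x) E) :
    ∃ U, IsClopen U ∧ connectedComponent x ⊆ U ∧ Disjoint U E := by
  have hx : (x : ConnectedComponents X) ∉ ConnectedComponents.mk '' E := by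
    rintro ⟨y, hyE, hyx⟩
    exact hxE.ne_of_mem (ConnectedComponents.coe_eq_coe'.1 hyx) hyE rfl
  obtain ⟨V, hV, hxV, hVE⟩ := compact_exists_isClopen_in_isOpen
    (hE.isCompact.image ConnectedComponents.continuous_coe).isClosed.isOpen_compl hx
  refine ⟨ConnectedComponents.mk ⁻¹' V, hV.preimage ConnectedComponents.continuous_coe,
    fun y hy => ?_, disjoint_left.2 fun y hyV hyE => hVE hyV ⟨y, hyE, rfl⟩⟩
  rwa [mem_preimage, ConnectedComponents.coe_eq_coe'.2 hy]

theorem IsCompact.exists_separation_of_not_joined {K W E : Set X} (hK : IsCompact K)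
    (hWK : W ⊆ K) (hEK : E ⊆ K) (hEc : IsClosed E) (hW : IsConnected W)
    (hE : IsPreconnected E)
    (h : ¬∃ T ⊆ K, IsConnected T ∧ W ⊆ T ∧ E ⊆ T) :
    ∃ A B, IsCompact A ∧ IsCompact B ∧ Disjoint A B ∧ A ∪ B = K ∧ W ⊆ A ∧ E ⊆ B := by
  obtain ⟨x, hxW⟩ := hW.nonempty
  have hxK := hWK hxW
  have hWΓ : W ⊆ connectedComponentIn K x :=
    hW.isPreconnected.subset_connectedComponentIn hxW hWK
  have hΓE : Disjoint (connectedComponentIn K x) E := by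
    refine disjoint_left.2 fun z hzΓ hzE => h ⟨_, union_subset (connectedComponentIn_subset K x)
      hEK, ?_, hWΓ.trans subset_union_left, subset_union_right⟩
    exact ⟨⟨x, .inl (mem_connectedComponentIn hxK)⟩,
      isPreconnected_connectedComponentIn.union' ⟨z, hzΓ, hzE⟩ hE⟩
  rw [connectedComponentIn_eq_image hxK] at hWΓ hΓE
  have := isCompact_iff_compactSpace.mp hK
  obtain ⟨U, hU, hxU, hUE⟩ := exists_isClopen_of_disjoint_connectedComponent
    (hEc.preimage continuous_subtype_val)
    ((hΓE.preimage Subtype.val).mono_left (subset_preimage_image _ _))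
  refine ⟨(↑) '' U, (↑) '' Uᶜ, hU.isClosed.isCompact.image continuous_subtype_val,
    hU.compl.isClosed.isCompact.image continuous_subtype_val,
    (disjoint_image_iff Subtype.val_injective).2 disjoint_compl_right,
    by rw [← image_union, union_compl_self, image_univ, Subtype.range_coe],
    hWΓ.trans (image_mono hxU), fun e he => ⟨⟨e, hEK he⟩, fun heU => ?_, rfl⟩⟩
  exact hUE.ne_of_mem heU he rfl

end Separation

theorem exists_pos_forall_lt_dist {X : Type*} [PseudoMetricSpace X] {s t : Set X}
    (hs : IsCompact s) (ht : IsClosed t) (hst : Disjoint s t) :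
    ∃ r > 0, ∀ x ∈ s, ∀ y ∈ t, r < dist x y := by
  obtain ⟨r, hr, h⟩ := Metric.exists_pos_forall_lt_edist hs ht hst
  refine ⟨r, hr, fun x hx y hy => ?_⟩
  have := h x hx y hy
  rwa [edist_nndist, ENNReal.coe_lt_coe, ← NNReal.coe_lt_coe, coe_nndist] at this

section Label

variable {X : Type*} {A B C D : Set X} {p q : X}

open Classical in
noncomputable def quarterLabel (A B C : Set X) (p : X) : ZMod 4 :=
  if p ∈ A then 0 else if p ∈ B then 2 else if p ∈ C then 1 else 3

lemma quarterLabel_of_mem_left (hp : p ∈ A) : quarterLabel A B C p = 0 := by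
  rw [quarterLabel, if_pos hp]

lemma quarterLabel_of_mem_right (hAB : Disjoint A B) (hp : p ∈ B) : quarterLabel A B C p = 2 := by
  rw [quarterLabel, if_neg (hAB.notMem_of_mem_right hp), if_pos hp]

lemma quarterLabel_ne_three_of_mem (hp : p ∈ C) : quarterLabel A B C p ≠ 3 := by
  unfold quarterLabel
  split_ifs <;> decide

lemma quarterLabel_ne_one_of_mem (hCD : Disjoint C D) (hp : p ∈ D) :
    quarterLabel A B C p ≠ 1 := by
  unfold quarterLabel
  split_ifs with _ _ hC
  · decide
  · decide
  · exact absurd hp (hCD.notMem_of_mem_left hC)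
  · decide

lemma mem_of_quarterLabel (hp : p ∈ A ∪ B ∪ C ∪ D) :
    (quarterLabel A B C p = 0 → p ∈ A) ∧ (quarterLabel A B C p = 2 → p ∈ B) ∧
      (quarterLabel A B C p = 1 → p ∈ C) ∧ (quarterLabel A B C p = 3 → p ∈ D) := by
  unfold quarterLabel
  split_ifs <;> simp_all +decide

lemma quarterLabel_sub_ne_two [PseudoMetricSpace X] {δ : ℝ}
    (hAB : ∀ a ∈ A, ∀ b ∈ B, δ < dist a b) (hCD : ∀ c ∈ C, ∀ d ∈ D, δ < dist c d)
    (hp : p ∈ A ∪ B ∪ C ∪ D) (hq : q ∈ A ∪ B ∪ C ∪ D) (hpq : dist p q ≤ δ) :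
    quarterLabel A B C q - quarterLabel A B C p ≠ 2 := by
  obtain ⟨hpA, hpB, hpC, hpD⟩ := mem_of_quarterLabel hp
  obtain ⟨hqA, hqB, hqC, hqD⟩ := mem_of_quarterLabel hq
  have hqp : dist q p ≤ δ := dist_comm p q ▸ hpq
  have hopposite : ∀ x y : ZMod 4, y - x = 2 →
      x = 0 ∧ y = 2 ∨ x = 2 ∧ y = 0 ∨ x = 1 ∧ y = 3 ∨ x = 3 ∧ y = 1 := by
    decide
  intro h
  rcases hopposite _ _ h with ⟨hx, hy⟩ | ⟨hx, hy⟩ | ⟨hx, hy⟩ | ⟨hx, hy⟩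
  · exact (hAB p (hpA hx) q (hqB hy)).not_ge hpq
  · exact (hAB q (hqA hy) p (hpB hx)).not_ge hqp
  · exact (hCD p (hpC hx) q (hqD hy)).not_ge hpq
  · exact (hCD q (hqC hy) p (hpD hx)).not_ge hqp

end Label

noncomputable def gridPoint (n i j : ℕ) : ℝ × ℝ := ((i : ℝ) / n, (j : ℝ) / n)

lemma div_mem_Icc_zero_one {i n : ℕ} (hi : i ≤ n) : (i : ℝ) / n ∈ Icc (0 : ℝ) 1 :=
  ⟨by positivity, div_le_one_of_le₀ (by exact_mod_cast hi) n.cast_nonneg⟩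

lemma gridPoint_mem_square {n i j : ℕ} (hi : i ≤ n) (hj : j ≤ n) :
    gridPoint n i j ∈ Icc (0 : ℝ) 1 ×ˢ Icc (0 : ℝ) 1 :=
  ⟨div_mem_Icc_zero_one hi, div_mem_Icc_zero_one hj⟩

lemma abs_div_sub_div_add_le {n k c : ℕ} (hc : c ≤ 1) :
    |(k : ℝ) / n - ((k + c : ℕ) : ℝ) / n| ≤ 1 / n := by
  rw [abs_sub_comm, Nat.cast_add, add_div, add_sub_cancel_left, abs_of_nonneg (by positivity)]
  gcongr
  exact_mod_cast hc

lemma dist_gridPoint_le (n i j : ℕ) {a b : ℕ} (ha : a ≤ 1) (hb : b ≤ 1) :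
    dist (gridPoint n i j) (gridPoint n (i + a) (j + b)) ≤ 1 / n := by
  rw [Prod.dist_eq, Real.dist_eq, Real.dist_eq]
  exact max_le (abs_div_sub_div_add_le ha) (abs_div_sub_div_add_le hb)

theorem false_of_square_separation {A B C D : Set (ℝ × ℝ)}
    (hA : IsCompact A) (hB : IsClosed B) (hC : IsCompact C) (hD : IsClosed D)
    (hAB : Disjoint A B) (hCD : Disjoint C D)
    (hcover : Icc (0 : ℝ) 1 ×ˢ Icc (0 : ℝ) 1 ⊆ A ∪ B ∪ C ∪ D)
    (hW : ({0} : Set ℝ) ×ˢ Icc (0 : ℝ) 1 ⊆ A) (hE : ({1} : Set ℝ) ×ˢ Icc (0 : ℝ) 1 ⊆ B)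
    (hS : Icc (0 : ℝ) 1 ×ˢ ({0} : Set ℝ) ⊆ C) (hN : Icc (0 : ℝ) 1 ×ˢ ({1} : Set ℝ) ⊆ D) :
    False := by
  obtain ⟨r, hr, hABr⟩ := exists_pos_forall_lt_dist hA hB hAB
  obtain ⟨s, hs, hCDs⟩ := exists_pos_forall_lt_dist hC hD hCD
  obtain ⟨N, hNrs⟩ := exists_nat_one_div_lt (lt_min hr hs)
  set n := N + 1
  have hn : (1 : ℝ) / n < min r s := by simpa [n] using hNrs
  have hn0 : (n : ℝ) ≠ 0 := by positivity
  set f : ℕ → ℕ → ZMod 4 := fun i j => quarterLabel A B C (gridPoint n i j)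
  have hf : ∀ i j a b, i + a ≤ n → j + b ≤ n → a ≤ 1 → b ≤ 1 →
      f (i + a) (j + b) - f i j ≠ 2 :=
    fun i j a b hi hj ha hb => quarterLabel_sub_ne_two
      (fun x hx y hy => (hn.trans_le (min_le_left r s)).trans (hABr x hx y hy))
      (fun x hx y hy => (hn.trans_le (min_le_right r s)).trans (hCDs x hx y hy))
      (hcover (gridPoint_mem_square (by omega) (by omega)))
      (hcover (gridPoint_mem_square hi hj)) (dist_gridPoint_le n i j ha hb)
  have hcoord : ∀ k ≤ n, (k : ℝ) / n ∈ Icc (0 : ℝ) 1 := fun k hk => div_mem_Icc_zero_one hk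
  have hzero : ((0 : ℕ) : ℝ) / n = 0 := by simp
  have hone : (n : ℝ) / n = 1 := div_self hn0
  refine false_of_grid_labelling (f := f) (m := n) (n := n)
    (fun j hj => quarterLabel_of_mem_left (hW ⟨hzero, hcoord j hj⟩))
    (fun j hj => quarterLabel_of_mem_right hAB (hE ⟨hone, hcoord j hj⟩))
    (fun i hi => quarterLabel_ne_three_of_mem (hS ⟨hcoord i hi, hzero⟩))
    (fun i hi => quarterLabel_ne_one_of_mem hCD (hN ⟨hcoord i hi, hone⟩))
    (fun i hi j hj => hf i j 1 0 (by omega) (by omega) le_rfl (Nat.zero_le _))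
    (fun i hi j hj => hf i j 0 1 (by omega) (by omega) (Nat.zero_le _) le_rfl)
    (fun i hi j hj => hf i j 1 1 (by omega) (by omega) le_rfl le_rfl)

end DiskSeparation

open DiskSeparation in
/-- Disk separation lemma (unit square case): if the square is covered by two closed
sets `K` and `L`, `K` containing the two vertical edges and `L` the two horizontal
edges, then either the two vertical edges lie in the same connected component of `K`,
or the two horizontal edges lie in the same connected component of `L`. -/
theorem disk_separation_square (K L : Set (ℝ × ℝ))
    (hKsub : K ⊆ Set.Icc (0:ℝ) 1 ×ˢ Set.Icc (0:ℝ) 1)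
    (hLsub : L ⊆ Set.Icc (0:ℝ) 1 ×ˢ Set.Icc (0:ℝ) 1)
    (hK : IsClosed K) (hL : IsClosed L)
    (hcover : K ∪ L = Set.Icc (0:ℝ) 1 ×ˢ Set.Icc (0:ℝ) 1)
    (hW : ({0} : Set ℝ) ×ˢ Set.Icc (0:ℝ) 1 ⊆ K)
    (hE : ({1} : Set ℝ) ×ˢ Set.Icc (0:ℝ) 1 ⊆ K)
    (hS : Set.Icc (0:ℝ) 1 ×ˢ ({0} : Set ℝ) ⊆ L)
    (hN : Set.Icc (0:ℝ) 1 ×ˢ ({1} : Set ℝ) ⊆ L) :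
    (∃ T ⊆ K, IsConnected T ∧
      ({0} : Set ℝ) ×ˢ Set.Icc (0:ℝ) 1 ⊆ T ∧ ({1} : Set ℝ) ×ˢ Set.Icc (0:ℝ) 1 ⊆ T) ∨
    (∃ T ⊆ L, IsConnected T ∧
      Set.Icc (0:ℝ) 1 ×ˢ ({0} : Set ℝ) ⊆ T ∧ Set.Icc (0:ℝ) 1 ×ˢ ({1} : Set ℝ) ⊆ T) := by
  have hsq : IsCompact (Set.Icc (0:ℝ) 1 ×ˢ Set.Icc (0:ℝ) 1) :=
    isCompact_Icc.prod isCompact_Icc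
  have hI : IsConnected (Set.Icc (0:ℝ) 1) := isConnected_Icc zero_le_one
  refine or_iff_not_imp_left.2 fun hKsep => by_contra fun hLsep => ?_
  obtain ⟨A, B, hA, hB, hAB, rfl, hWA, hEB⟩ :=
    (hsq.of_isClosed_subset hK hKsub).exists_separation_of_not_joined hW hE
      (isClosed_singleton.prod isClosed_Icc) (isConnected_singleton.prod hI)
      (isConnected_singleton.prod hI).isPreconnected hKsep
  obtain ⟨C, D, hC, hD, hCD, rfl, hSC, hND⟩ :=
    (hsq.of_isClosed_subset hL hLsub).exists_separation_of_not_joined hS hN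
      (isClosed_Icc.prod isClosed_singleton) (hI.prod isConnected_singleton)
      (hI.prod isConnected_singleton).isPreconnected hLsep
  exact false_of_square_separation hA hB.isClosed hC hD.isClosed hAB hCD
    (by rw [← hcover, ← Set.union_assoc]) hWA hEB hSC hND
end

section
/- Let K, L ⊆ [0,1]² be closed sets with K ∪ L = [0,1]², W = {0}×[0,1] ⊆ K, E = {1}×[0,1] ⊆ K, S = [0,1]×{0} ⊆ L, N = [0,1]×{1} ⊆ L. Suppose W and E lie in different connected components of K and S and N lie in different connected components of L. Then there exists a continuous map f : [0,1]² → [0,1]² without a fixed point — a contradiction; hence no such configuration exists. -/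
/-!
Split `K` into disjoint compact pieces `K_W ⊇ W`, `K_E ⊇ E` and `L` into `L_S ⊇ S`, `L_N ⊇ N`
(in a compact Hausdorff space components are quasi-components). Label the points of a fine grid
by compass directions: `E` on `K_E`, `W` on `K_W`, `N` on `L_N`, `S` on `L_S`. Pieces with
opposite labels are a positive distance apart, so neighbouring grid points never carry opposite
labels. Reading labels as angles, the winding of the labelling around every grid triangle is
then `0`, hence so is its winding around the boundary of the square. But each side of the square
avoids one label (the west side is never labelled `E`, and so on), which makes the winding along
each side a difference of lifts, and these add up to a nonzero boundary winding. This discrete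
argument takes the place of Brouwer's fixed point theorem.
-/

open Set

theorem IsCompact.exists_isCompact_separation {X : Type*} [TopologicalSpace X] [T2Space X]
    {A P Q : Set X} (hA : IsCompact A) (hPA : P ⊆ A) (hQA : Q ⊆ A)
    (hP : IsConnected P) (hQ : IsConnected Q)
    (hsep : ¬ ∃ T ⊆ A, IsConnected T ∧ P ⊆ T ∧ Q ⊆ T) :
    ∃ A₁ A₂ : Set X, IsCompact A₁ ∧ IsCompact A₂ ∧ A₁ ∪ A₂ = A ∧ Disjoint A₁ A₂ ∧
      P ⊆ A₁ ∧ Q ⊆ A₂ := by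
  obtain ⟨x, hx⟩ := hP.nonempty
  obtain ⟨y, hy⟩ := hQ.nonempty
  have hPx : P ⊆ connectedComponentIn A x := hP.isPreconnected.subset_connectedComponentIn hx hPA
  have hQy : Q ⊆ connectedComponentIn A y := hQ.isPreconnected.subset_connectedComponentIn hy hQA
  have hyx : y ∉ connectedComponentIn A x := fun h ↦ hsep
    ⟨_, connectedComponentIn_subset A x, isConnected_connectedComponentIn_iff.mpr (hPA hx), hPx,
      connectedComponentIn_eq h ▸ hQy⟩
  have : CompactSpace A := isCompact_iff_compactSpace.mp hA
  let x' : A := ⟨x, hPA hx⟩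
  let y' : A := ⟨y, hQA hy⟩
  rw [connectedComponentIn_eq_image (hPA hx)] at hPx hyx
  rw [connectedComponentIn_eq_image (hQA hy)] at hQy
  obtain ⟨Z, hZ, hxZ, hyZ⟩ : ∃ Z : Set A, IsClopen Z ∧ x' ∈ Z ∧ y' ∉ Z := by
    have : y' ∉ connectedComponent x' := fun h ↦ hyx ⟨y', h, rfl⟩
    simpa [connectedComponent_eq_iInter_isClopen x'] using this
  refine ⟨(↑) '' Z, (↑) '' Zᶜ, hZ.isClosed.isCompact.image continuous_subtype_val,
    hZ.compl.isClosed.isCompact.image continuous_subtype_val, ?_, ?_,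
    hPx.trans (image_mono (hZ.connectedComponent_subset hxZ)),
    hQy.trans (image_mono (hZ.compl.connectedComponent_subset hyZ))⟩
  · rw [← image_union, union_compl_self, image_univ, Subtype.range_coe]
  · exact disjoint_image_of_injective Subtype.val_injective disjoint_compl_right

namespace Compass

section Winding

open Finset

/-- Labels are compass directions `0 = E`, `1 = N`, `2 = W`, `3 = S`. -/
def NotOpposite (a b : Fin 4) : Prop := a - b ≠ 2

instance (a b : Fin 4) : Decidable (NotOpposite a b) := inferInstanceAs (Decidable (_ ≠ _))

def turn (a b : Fin 4) : ℤ := if b - a = 1 then 1 else if b - a = 3 then -1 else 0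

def lift (v x : Fin 4) : ℤ := ((x - v : Fin 4) : ℤ)

def pathTurn (f : ℕ → Fin 4) (m : ℕ) : ℤ := ∑ k ∈ range m, turn (f k) (f (k + 1))

theorem turn_add_turn : ∀ a b c : Fin 4, NotOpposite a b → NotOpposite b c → NotOpposite a c →
    turn a b + turn b c = turn a c := by decide

theorem turn_eq_lift_sub_lift : ∀ v a b : Fin 4, a ≠ v → b ≠ v → NotOpposite a b →
    turn a b = lift v b - lift v a := by decide

theorem pathTurn_eq_lift_sub_lift {v : Fin 4} {f : ℕ → Fin 4} {m : ℕ}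
    (hv : ∀ k ≤ m, f k ≠ v) (hf : ∀ k < m, NotOpposite (f k) (f (k + 1))) :
    pathTurn f m = lift v (f m) - lift v (f 0) := by
  rw [pathTurn, ← sum_range_sub (fun k ↦ lift v (f k))]
  refine sum_congr rfl fun k hk ↦ ?_
  have hk := mem_range.mp hk
  exact turn_eq_lift_sub_lift v _ _ (hv k hk.le) (hv (k + 1) hk) (hf k hk)

def NoOppositeNeighbors (n : ℕ) (ℓ : ℕ → ℕ → Fin 4) : Prop :=
  ∀ i j i' j', i ≤ i' → i' ≤ i + 1 → j ≤ j' → j' ≤ j + 1 → i' ≤ n → j' ≤ n →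
    NotOpposite (ℓ i j) (ℓ i' j')

variable {n : ℕ} {ℓ : ℕ → ℕ → Fin 4}

theorem pathTurn_row_succ_sub (hadj : NoOppositeNeighbors n ℓ) {j : ℕ} (hj : j < n) :
    pathTurn (ℓ · (j + 1)) n - pathTurn (ℓ · j) n =
      turn (ℓ n j) (ℓ n (j + 1)) - turn (ℓ 0 j) (ℓ 0 (j + 1)) := by
  rw [pathTurn, pathTurn, ← sum_sub_distrib,
    ← sum_range_sub (fun i ↦ turn (ℓ i j) (ℓ i (j + 1)))]
  refine sum_congr rfl fun i hi ↦ ?_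
  have hi := mem_range.mp hi
  have lower := turn_add_turn (ℓ i j) (ℓ (i + 1) j) (ℓ (i + 1) (j + 1))
    (hadj _ _ _ _ (by omega) le_rfl le_rfl (by omega) hi (by omega))
    (hadj _ _ _ _ le_rfl (by omega) (by omega) le_rfl hi hj)
    (hadj _ _ _ _ (by omega) le_rfl (by omega) le_rfl hi hj)
  have upper := turn_add_turn (ℓ i j) (ℓ i (j + 1)) (ℓ (i + 1) (j + 1))
    (hadj _ _ _ _ le_rfl (by omega) (by omega) le_rfl (by omega) hj)
    (hadj _ _ _ _ (by omega) le_rfl le_rfl (by omega) hi hj)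
    (hadj _ _ _ _ (by omega) le_rfl (by omega) le_rfl hi hj)
  linarith

theorem pathTurn_top_sub_bottom (hadj : NoOppositeNeighbors n ℓ) :
    pathTurn (ℓ · n) n - pathTurn (ℓ · 0) n = pathTurn (ℓ n) n - pathTurn (ℓ 0) n := by
  rw [← sum_range_sub (fun j ↦ pathTurn (ℓ · j) n), pathTurn, pathTurn, ← sum_sub_distrib]
  exact sum_congr rfl fun j hj ↦ pathTurn_row_succ_sub hadj (mem_range.mp hj)

theorem corner_lift_ne : ∀ a b c d : Fin 4, a ≠ 0 → a ≠ 1 → b ≠ 2 → b ≠ 1 →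
    c ≠ 0 → c ≠ 3 → d ≠ 2 → d ≠ 3 →
    (lift 3 d - lift 3 c) - (lift 1 b - lift 1 a) ≠
      (lift 2 d - lift 2 b) - (lift 0 c - lift 0 a) := by
  decide

theorem false_of_grid_labelling (hadj : NoOppositeNeighbors n ℓ)
    (hW : ∀ j ≤ n, ℓ 0 j ≠ 0) (hE : ∀ j ≤ n, ℓ n j ≠ 2)
    (hS : ∀ i ≤ n, ℓ i 0 ≠ 1) (hN : ∀ i ≤ n, ℓ i n ≠ 3) : False := by
  have hrow : ∀ j ≤ n, ∀ i < n, NotOpposite (ℓ i j) (ℓ (i + 1) j) := fun j hj i hi ↦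
    hadj _ _ _ _ (by omega) le_rfl le_rfl (by omega) hi hj
  have hcol : ∀ i ≤ n, ∀ j < n, NotOpposite (ℓ i j) (ℓ i (j + 1)) := fun i hi j hj ↦
    hadj _ _ _ _ le_rfl (by omega) (by omega) le_rfl hi hj
  have h := pathTurn_top_sub_bottom hadj
  rw [pathTurn_eq_lift_sub_lift (hN · ·) (hrow n le_rfl),
    pathTurn_eq_lift_sub_lift (v := 1) (hS · ·) (hrow 0 n.zero_le),
    pathTurn_eq_lift_sub_lift (hE · ·) (hcol n le_rfl),
    pathTurn_eq_lift_sub_lift (v := 0) (hW · ·) (hcol 0 n.zero_le)] at h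
  exact corner_lift_ne _ _ _ _
    (hW 0 n.zero_le) (hS 0 n.zero_le) (hE 0 n.zero_le) (hS n le_rfl)
    (hW n le_rfl) (hN 0 n.zero_le) (hE n le_rfl) (hN n le_rfl) h

end Winding

theorem dist_natCast_div_le {a b : ℕ} (N : ℕ) (hab : a ≤ b) (hba : b ≤ a + 1) :
    dist ((a : ℝ) / N) ((b : ℝ) / N) ≤ 1 / N := by
  rw [Real.dist_eq, ← sub_div, abs_div, Nat.abs_cast, abs_sub_comm,
    abs_of_nonneg (sub_nonneg.mpr (by exact_mod_cast hab))]
  gcongr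
  have : (b : ℝ) ≤ a + 1 := by exact_mod_cast hba
  linarith

theorem natCast_div_mem_Icc {i N : ℕ} (hi : i ≤ N) : (i : ℝ) / N ∈ Icc (0 : ℝ) 1 :=
  ⟨by positivity, div_le_one_of_le₀ (by exact_mod_cast hi) N.cast_nonneg⟩

theorem false_of_square_labelling (lab : ℝ × ℝ → Fin 4) {δ : ℝ} (hδ : 0 < δ)
    (hlab : ∀ p ∈ Icc (0 : ℝ) 1 ×ˢ Icc (0 : ℝ) 1, ∀ q ∈ Icc (0 : ℝ) 1 ×ˢ Icc (0 : ℝ) 1,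
      dist p q < δ → NotOpposite (lab p) (lab q))
    (hW : ∀ y ∈ Icc (0 : ℝ) 1, lab (0, y) ≠ 0) (hE : ∀ y ∈ Icc (0 : ℝ) 1, lab (1, y) ≠ 2)
    (hS : ∀ x ∈ Icc (0 : ℝ) 1, lab (x, 0) ≠ 1) (hN : ∀ x ∈ Icc (0 : ℝ) 1, lab (x, 1) ≠ 3) :
    False := by
  obtain ⟨m, hm⟩ := exists_nat_one_div_lt hδ
  set N := m + 1
  have hN0 : (N : ℝ) ≠ 0 := by positivity
  refine false_of_grid_labelling (n := N) (ℓ := fun i j ↦ lab ((i : ℝ) / N, (j : ℝ) / N))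
    (fun i j i' j' hii' hi'i hjj' hj'j hi' hj' ↦ hlab _
      ⟨natCast_div_mem_Icc (by omega), natCast_div_mem_Icc (by omega)⟩ _
      ⟨natCast_div_mem_Icc hi', natCast_div_mem_Icc hj'⟩ ?_)
    (fun j hj ↦ by simpa using hW _ (natCast_div_mem_Icc hj))
    (fun j hj ↦ by simpa [hN0] using hE _ (natCast_div_mem_Icc hj))
    (fun i hi ↦ by simpa using hS _ (natCast_div_mem_Icc hi))
    (fun i hi ↦ by simpa [hN0] using hN _ (natCast_div_mem_Icc hi))
  calc dist _ _ ≤ 1 / (N : ℝ) :=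
        Prod.dist_eq.trans_le (max_le (dist_natCast_div_le N hii' hi'i)
          (dist_natCast_div_le N hjj' hj'j))
    _ < δ := by simpa [N] using hm

theorem exists_pos_le_dist_of_disjoint_opposite {C : Fin 4 → Set (ℝ × ℝ)}
    (hC : ∀ k, IsCompact (C k)) (hopp : ∀ k, Disjoint (C k) (C (k + 2))) :
    ∃ δ > 0, ∀ k, ∀ p ∈ C k, ∀ q ∈ C (k + 2), δ ≤ dist p q := by
  have hD : IsCompact (⋃ k, C k ×ˢ C (k + 2)) := isCompact_iUnion fun k ↦ (hC k).prod (hC _)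
  obtain ⟨δ, hδ, hle⟩ := hD.exists_forall_le' continuous_dist.continuousOn (a := 0) <| by
    simp only [mem_iUnion, mem_prod]
    rintro ⟨p, q⟩ ⟨k, hp, hq⟩
    exact dist_pos.mpr ((hopp k).ne_of_mem hp hq)
  exact ⟨δ, hδ, fun k p hp q hq ↦ hle (p, q) (mem_iUnion.mpr ⟨k, hp, hq⟩)⟩

theorem false_of_four_piece_cover {C : Fin 4 → Set (ℝ × ℝ)} (hC : ∀ k, IsCompact (C k))
    (hcover : Icc (0 : ℝ) 1 ×ˢ Icc (0 : ℝ) 1 ⊆ ⋃ k, C k)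
    (hopp : ∀ k, Disjoint (C k) (C (k + 2)))
    (hW : Disjoint (C 0) ({0} ×ˢ Icc (0 : ℝ) 1)) (hE : Disjoint (C 2) ({1} ×ˢ Icc (0 : ℝ) 1))
    (hS : Disjoint (C 1) (Icc (0 : ℝ) 1 ×ˢ {0})) (hN : Disjoint (C 3) (Icc (0 : ℝ) 1 ×ˢ {1})) :
    False := by
  obtain ⟨δ, hδ, hsep⟩ := exists_pos_le_dist_of_disjoint_opposite hC hopp
  have hpiece : ∀ p, ∃ k, p ∈ Icc (0 : ℝ) 1 ×ˢ Icc (0 : ℝ) 1 → p ∈ C k := fun p ↦ by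
    by_cases hp : p ∈ Icc (0 : ℝ) 1 ×ˢ Icc (0 : ℝ) 1
    · obtain ⟨k, hk⟩ := mem_iUnion.mp (hcover hp)
      exact ⟨k, fun _ ↦ hk⟩
    · exact ⟨0, fun h ↦ absurd h hp⟩
  choose lab hlab using hpiece
  have h0 : (0 : ℝ) ∈ Icc (0 : ℝ) 1 := left_mem_Icc.mpr zero_le_one
  have h1 : (1 : ℝ) ∈ Icc (0 : ℝ) 1 := right_mem_Icc.mpr zero_le_one
  refine false_of_square_labelling lab hδ (fun p hp q hq hpq hlabpq ↦ ?_)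
    (fun y hy h ↦ Set.disjoint_left.mp hW (h ▸ hlab _ ⟨h0, hy⟩) ⟨mem_singleton _, hy⟩)
    (fun y hy h ↦ Set.disjoint_left.mp hE (h ▸ hlab _ ⟨h1, hy⟩) ⟨mem_singleton _, hy⟩)
    (fun x hx h ↦ Set.disjoint_left.mp hS (h ▸ hlab _ ⟨hx, h0⟩) ⟨hx, mem_singleton _⟩)
    (fun x hx h ↦ Set.disjoint_left.mp hN (h ▸ hlab _ ⟨hx, h1⟩) ⟨hx, mem_singleton _⟩)
  have hp' : p ∈ C (lab q + 2) := sub_eq_iff_eq_add'.mp hlabpq ▸ hlab p hp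
  linarith [hsep _ q (hlab q hq) p hp', dist_comm p q]

end Compass

/-- If the unit square is covered by closed sets `K` (containing both vertical edges)
and `L` (containing both horizontal edges), it is impossible that the vertical edges
lie in different connected components of `K` while the horizontal edges lie in
different connected components of `L`: such a configuration would give a continuous
self-map of the square without fixed points, contradicting Brouwer's theorem. -/
theorem no_doubly_separated_cover (K L : Set (ℝ × ℝ))
    (hKsub : K ⊆ Set.Icc (0:ℝ) 1 ×ˢ Set.Icc (0:ℝ) 1)
    (hLsub : L ⊆ Set.Icc (0:ℝ) 1 ×ˢ Set.Icc (0:ℝ) 1)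
    (hK : IsClosed K) (hL : IsClosed L)
    (hcover : K ∪ L = Set.Icc (0:ℝ) 1 ×ˢ Set.Icc (0:ℝ) 1)
    (hW : ({0} : Set ℝ) ×ˢ Set.Icc (0:ℝ) 1 ⊆ K)
    (hE : ({1} : Set ℝ) ×ˢ Set.Icc (0:ℝ) 1 ⊆ K)
    (hS : Set.Icc (0:ℝ) 1 ×ˢ ({0} : Set ℝ) ⊆ L)
    (hN : Set.Icc (0:ℝ) 1 ×ˢ ({1} : Set ℝ) ⊆ L)
    (hKsep : ¬ ∃ T ⊆ K, IsConnected T ∧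
      ({0} : Set ℝ) ×ˢ Set.Icc (0:ℝ) 1 ⊆ T ∧ ({1} : Set ℝ) ×ˢ Set.Icc (0:ℝ) 1 ⊆ T)
    (hLsep : ¬ ∃ T ⊆ L, IsConnected T ∧
      Set.Icc (0:ℝ) 1 ×ˢ ({0} : Set ℝ) ⊆ T ∧ Set.Icc (0:ℝ) 1 ×ˢ ({1} : Set ℝ) ⊆ T) :
    False := by
  have hsq : IsCompact (Icc (0 : ℝ) 1 ×ˢ Icc (0 : ℝ) 1) := isCompact_Icc.prod isCompact_Icc
  have hI : IsConnected (Icc (0 : ℝ) 1) := isConnected_Icc zero_le_one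
  obtain ⟨K₁, K₂, hK₁, hK₂, hKun, hKd, hWK₁, hEK₂⟩ :=
    (hsq.of_isClosed_subset hK hKsub).exists_isCompact_separation hW hE
      (isConnected_singleton.prod hI) (isConnected_singleton.prod hI) hKsep
  obtain ⟨L₁, L₂, hL₁, hL₂, hLun, hLd, hSL₁, hNL₂⟩ :=
    (hsq.of_isClosed_subset hL hLsub).exists_isCompact_separation hS hN
      (hI.prod isConnected_singleton) (hI.prod isConnected_singleton) hLsep
  refine Compass.false_of_four_piece_cover (C := ![K₂, L₂, K₁, L₁])
    (by simp [Fin.forall_fin_succ, hK₁, hK₂, hL₁, hL₂]) ?_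
    (by simp [Fin.forall_fin_succ, hKd, hKd.symm, hLd, hLd.symm])
    (hKd.symm.mono_right hWK₁) (hKd.mono_right hEK₂)
    (hLd.symm.mono_right hSL₁) (hLd.mono_right hNL₂)
  rw [← hcover, ← hKun, ← hLun]
  rintro p ((hp | hp) | hp | hp)
  exacts [mem_iUnion_of_mem 2 hp, mem_iUnion_of_mem 0 hp, mem_iUnion_of_mem 3 hp,
    mem_iUnion_of_mem 1 hp]
end

section
/- Let D₁, D₂ ⊆ ℝ² be open disks with radii r₁, r₂ ∈ [1/2, 1] and centers z₁, z₂ with ‖z₁ − z₂‖ < 1/2. Let a, b ∈ ℝ² \ (D₁ ∪ D₂) with ‖a − b‖ < 1/2, and let m ∈ D₁ ∩ D₂ be not collinear with a and b. Then there exists a rectifiable curve C from a to b avoiding D₁ ∪ D₂ with length(C) ≤ arcsin(2‖a − b‖) − ‖a − b‖. -/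
/-!
The curve is a tent: the polygonal path `a → (a + b)/2 + v → b` with `v ⟂ b - a`.
If the segment `[a, b]` misses both disks, take `v = 0`. Otherwise it enters one of them, say
`D₁`; put `d = ‖a - b‖`. Since `a` and `b` lie outside `D₁`, the chord of `D₁` on the line `ab`
has length at most `d`, so `z₁` is at distance at least `√(r₁² - d²/4) ≥ √(1 - d²)/2 ≥ 3/8`
from that line, and a tent of height `h = d² / (2√(1 - d²))` on the far side from `z₁` clears
`D₁`. As `‖z₁ - z₂‖ < 1/2`, the centre `z₂` lies less than `1/8` into the apex side of the line;
then either the tent bends away from `z₂`, or `z₂` is too close to the line for `[a, b]` to enter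
`D₂`, so the long chord of `D₂` lies beyond one end of `[a, b]` and the low tent passes outside
it. The tent has length `√(d² + 4h²) = d/√(1 - d²)`, and `d/√(1 - d²) + d ≤ arcsin (2d)` because
`sin (arcsin d + d/√(1 - d²)) ≤ d + d`.
-/

open Real Set Metric Module
open scoped RealInnerProductSpace EuclideanSpace

lemma Real.self_le_arcsin {x : ℝ} (h₀ : 0 ≤ x) (h₁ : x ≤ 1) : x ≤ arcsin x := by
  simpa [sin_arcsin (by linarith) h₁] using sin_le (arcsin_nonneg.2 h₀)

lemma Real.div_sqrt_one_sub_sq_add_le_arcsin_two_mul {d : ℝ} (h₀ : 0 ≤ d) (h₁ : d ≤ 1 / 2) :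
    d / √(1 - d ^ 2) + d ≤ arcsin (2 * d) := by
  set s := √(1 - d ^ 2) with hs
  have hs₀ : 0 < s := sqrt_pos.2 (by nlinarith)
  have hs₂ : s ^ 2 = 1 - d ^ 2 := sq_sqrt (by nlinarith)
  have hds : d / s ≤ 1 := (div_le_one hs₀).2 (by nlinarith)
  have harc : arcsin d ≤ π / 6 :=
    calc arcsin d ≤ arcsin (sin (π / 6)) := by rw [sin_pi_div_six]; exact arcsin_le_arcsin h₁
    _ = π / 6 := arcsin_sin (by linarith [pi_pos]) (by linarith [pi_pos])
  have hsin : sin (arcsin d + d / s) ≤ 2 * d := by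
    rw [sin_add, sin_arcsin (by linarith) (by linarith), cos_arcsin, ← hs]
    have hcos : d * cos (d / s) ≤ d := mul_le_of_le_one_right h₀ (cos_le_one _)
    have hsin : s * sin (d / s) ≤ d :=
      calc s * sin (d / s) ≤ s * (d / s) := by gcongr; exact sin_le (by positivity)
      _ = d := by field_simp
    linarith
  have hle : arcsin d + d / s ≤ arcsin (2 * d) :=
    (le_arcsin_iff_sin_le ⟨by linarith [neg_pi_div_two_le_arcsin d, div_nonneg h₀ hs₀.le],
      by linarith [pi_gt_three]⟩ ⟨by linarith, by linarith⟩).2 hsin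
  linarith [self_le_arcsin h₀ (by linarith)]

lemma LipschitzWith.eVariationOn_Icc_le {E : Type*} [PseudoEMetricSpace E] {f : ℝ → E}
    {K : NNReal} (hf : LipschitzWith K f) (a b : ℝ) :
    eVariationOn f (Icc a b) ≤ K * ENNReal.ofReal (b - a) := by
  simpa using (hf.lipschitzOnWith (s := univ)).comp_eVariationOn_le (g := id)
    (mapsTo_univ _ (Icc a b))

section Tent

variable {E : Type*} [NormedAddCommGroup E] [InnerProductSpace ℝ E]

def tentPath (a b v : E) (t : ℝ) : E := a + t • (b - a) + (2 * min t (1 - t)) • v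

@[simp] lemma tentPath_zero (a b v : E) : tentPath a b v 0 = a := by simp [tentPath]

@[simp] lemma tentPath_one (a b v : E) : tentPath a b v 1 = b := by simp [tentPath]

lemma lipschitzWith_tentPath {a b v : E} (hv : ⟪b - a, v⟫ = 0) :
    LipschitzWith (√(‖b - a‖ ^ 2 + 4 * ‖v‖ ^ 2)).toNNReal (tentPath a b v) := by
  refine LipschitzWith.of_dist_le_mul fun x y => ?_
  rw [Real.coe_toNNReal _ (sqrt_nonneg _), dist_eq_norm, Real.dist_eq]
  have hdiff : tentPath a b v x - tentPath a b v y
      = (x - y) • (b - a) + (2 * (min x (1 - x) - min y (1 - y))) • v := by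
    simp only [tentPath, sub_smul, mul_sub]; abel
  have hmin : (min x (1 - x) - min y (1 - y)) ^ 2 ≤ (x - y) ^ 2 :=
    sq_le_sq.2 (by simpa [abs_sub_comm] using abs_min_sub_min_le_max x (1 - x) y (1 - y))
  have hsq : ‖tentPath a b v x - tentPath a b v y‖ ^ 2
      ≤ (√(‖b - a‖ ^ 2 + 4 * ‖v‖ ^ 2) * |x - y|) ^ 2 := by
    rw [hdiff, norm_add_sq_real, real_inner_smul_left, real_inner_smul_right, hv, norm_smul,
      norm_smul]
    simp only [Real.norm_eq_abs, mul_pow, sq_abs,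
      sq_sqrt (by positivity : (0 : ℝ) ≤ ‖b - a‖ ^ 2 + 4 * ‖v‖ ^ 2)]
    nlinarith [sq_nonneg ‖v‖]
  exact (sq_le_sq₀ (norm_nonneg _) (by positivity)).1 hsq

lemma eVariationOn_tentPath_le {a b v : E} (hv : ⟪b - a, v⟫ = 0) :
    eVariationOn (tentPath a b v) (Icc 0 1) ≤ ENNReal.ofReal √(‖b - a‖ ^ 2 + 4 * ‖v‖ ^ 2) := by
  refine ((lipschitzWith_tentPath hv).eVariationOn_Icc_le 0 1).trans_eq ?_
  rw [sub_zero, ENNReal.ofReal_one, mul_one]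
  rfl

end Tent

/-- Just enough height to clear a disk of radius `≥ 1/2` that a segment of length `d` enters
with both endpoints outside: the centre is then at distance `≥ √(1 - d²)/2` from the line
(see `sq_le_neg_four_mul_tentHeight_mul`). -/
noncomputable def tentHeight (d : ℝ) : ℝ := d ^ 2 / (2 * √(1 - d ^ 2))

lemma tentHeight_nonneg (d : ℝ) : 0 ≤ tentHeight d := by unfold tentHeight; positivity

lemma sqrt_sq_add_four_mul_tentHeight_sq {d : ℝ} (h₀ : 0 ≤ d) (h₁ : d < 1) :
    √(d ^ 2 + 4 * tentHeight d ^ 2) = d / √(1 - d ^ 2) := by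
  have hs₀ : 0 < √(1 - d ^ 2) := sqrt_pos.2 (by nlinarith)
  have hs₂ : √(1 - d ^ 2) ^ 2 = 1 - d ^ 2 := sq_sqrt (by nlinarith)
  rw [sqrt_eq_iff_eq_sq (by positivity) (by positivity), tentHeight]
  field_simp
  rw [hs₂]
  ring

lemma sqrt_sq_add_four_mul_sq_le_arcsin_sub {d x : ℝ} (h₀ : 0 ≤ d) (h₁ : d ≤ 1 / 2)
    (hx₀ : 0 ≤ x) (hx : x ≤ tentHeight d) : √(d ^ 2 + 4 * x ^ 2) ≤ arcsin (2 * d) - d :=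
  calc √(d ^ 2 + 4 * x ^ 2) ≤ √(d ^ 2 + 4 * tentHeight d ^ 2) := by gcongr
  _ = d / √(1 - d ^ 2) := sqrt_sq_add_four_mul_tentHeight_sq h₀ (by linarith)
  _ ≤ arcsin (2 * d) - d := by linarith [div_sqrt_one_sub_sq_add_le_arcsin_two_mul h₀ h₁]

lemma sq_le_neg_four_mul_tentHeight_mul {d q : ℝ} (h₀ : 0 ≤ d) (h₁ : d < 1) (hq : q ≤ 0)
    (hdq : 1 - d ^ 2 ≤ 4 * q ^ 2) : d ^ 2 ≤ -4 * tentHeight d * q := by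
  have hs₀ : 0 < √(1 - d ^ 2) := sqrt_pos.2 (by nlinarith)
  have hs : √(1 - d ^ 2) ≤ -2 * q := by
    rw [show -2 * q = √((-2 * q) ^ 2) from (sqrt_sq (by linarith)).symm]
    exact sqrt_le_sqrt (by nlinarith)
  have h : -4 * tentHeight d * q = d ^ 2 * (-2 * q) / √(1 - d ^ 2) := by
    rw [tentHeight]; field_simp; ring
  rw [h, le_div_iff₀ hs₀]
  exact mul_le_mul_of_nonneg_left hs (sq_nonneg d)

lemma two_mul_tentHeight_mul_le {d q A : ℝ} (h₀ : 0 ≤ d) (h₁ : d ≤ 1 / 2) (hq₀ : 0 ≤ q)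
    (hq : q < 1 / 8) (hA₀ : 0 ≤ A) (hA : 15 / 64 ≤ A ^ 2) : 2 * tentHeight d * q ≤ A * d := by
  have hs₀ : 0 < √(1 - d ^ 2) := sqrt_pos.2 (by nlinarith)
  have hs₂ : √(1 - d ^ 2) ^ 2 = 1 - d ^ 2 := sq_sqrt (by nlinarith)
  have hqs : q ≤ A * √(1 - d ^ 2) := by
    have : q ^ 2 ≤ (A * √(1 - d ^ 2)) ^ 2 := by rw [mul_pow, hs₂]; nlinarith
    nlinarith [mul_nonneg hA₀ hs₀.le]
  have h : 2 * tentHeight d * q = d * (d * q) / √(1 - d ^ 2) := by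
    rw [tentHeight]; field_simp
  rw [h, div_le_iff₀ hs₀]
  have : d * q ≤ A * √(1 - d ^ 2) := by nlinarith
  nlinarith [mul_le_mul_of_nonneg_left this h₀]

/-! In the following lemmas the segment is `[0, d] × {0}`, the disk has centre `(p, q)` and
radius `r`, and at time `t` the tent over the segment is at `(t * d, 2 * h * min t (1 - t))`. -/

lemma exists_half_chord {d p q r x : ℝ} (ha : r ^ 2 ≤ p ^ 2 + q ^ 2)
    (hb : r ^ 2 ≤ (d - p) ^ 2 + q ^ 2) (hx : x ∈ Icc 0 d) (hin : (x - p) ^ 2 + q ^ 2 < r ^ 2) :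
    ∃ c, 0 ≤ c ∧ c ^ 2 = r ^ 2 - q ^ 2 ∧ c ≤ p ∧ c ≤ d - p := by
  obtain ⟨hx₀, hxd⟩ := hx
  refine ⟨√(r ^ 2 - q ^ 2), sqrt_nonneg _, sq_sqrt (by nlinarith), ?_, ?_⟩
  · have hp : 0 ≤ p := by nlinarith
    nlinarith [sqrt_nonneg (r ^ 2 - q ^ 2), sq_sqrt (by nlinarith : 0 ≤ r ^ 2 - q ^ 2)]
  · have hp : p ≤ d := by nlinarith
    nlinarith [sqrt_nonneg (r ^ 2 - q ^ 2), sq_sqrt (by nlinarith : 0 ≤ r ^ 2 - q ^ 2)]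

lemma sq_sub_sq_le_mul {c d p x : ℝ} (hc : 0 ≤ c) (hcp : c ≤ p) (hcd : 2 * c ≤ d)
    (hx : 0 ≤ x) : c ^ 2 - (x - p) ^ 2 ≤ d * x := by
  rcases le_total c x with hcx | hxc <;> nlinarith

lemma sq_le_tent_of_half_chord {c d h p q r t : ℝ} (hc : 0 ≤ c) (hcp : c ≤ p)
    (hcdp : c ≤ d - p) (hcr : c ^ 2 = r ^ 2 - q ^ 2) (hh : d ^ 2 ≤ -4 * h * q)
    (ht : t ∈ Icc 0 1) : r ^ 2 ≤ (t * d - p) ^ 2 + (2 * h * min t (1 - t) - q) ^ 2 := by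
  obtain ⟨ht₀, ht₁⟩ := ht
  have hcd : 2 * c ≤ d := by linarith
  have hd : 0 ≤ d := by linarith
  have hleft := sq_sub_sq_le_mul hc hcp hcd (mul_nonneg ht₀ hd)
  have hright := sq_sub_sq_le_mul hc hcdp hcd (x := d - t * d) (by nlinarith)
  have hlift : min t (1 - t) * d ^ 2 ≤ min t (1 - t) * (-4 * h * q) :=
    mul_le_mul_of_nonneg_left hh (le_min ht₀ (sub_nonneg.2 ht₁))
  rcases le_total t (1 - t) with hmin | hmin
  · rw [min_eq_left hmin] at hlift ⊢
    nlinarith [sq_nonneg (h * t)]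
  · rw [min_eq_right hmin] at hlift ⊢
    nlinarith [sq_nonneg (h * (1 - t))]

lemma sq_add_sq_le_tent_of_add_nonpos {A d h m p q x : ℝ} (hA : 0 ≤ A) (hpA : p + A ≤ 0)
    (hx : 0 ≤ x) (hm : 0 ≤ m) (hmx : m * d ≤ x) (hh : 2 * h * q ≤ A * d) :
    A ^ 2 + q ^ 2 ≤ (x - p) ^ 2 + (2 * h * m - q) ^ 2 := by
  have h₁ : (x + A) ^ 2 ≤ (x - p) ^ 2 := by nlinarith
  have h₂ : 2 * m * (2 * h * q) ≤ 2 * m * (A * d) := by gcongr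
  nlinarith [mul_le_mul_of_nonneg_left hmx hA, sq_nonneg x, sq_nonneg (h * m)]

lemma sq_le_tent_of_disjoint {d h p q r t : ℝ} (hd : 0 ≤ d) (hqr : q ^ 2 < r ^ 2)
    (hh : 2 * h * q ≤ √(r ^ 2 - q ^ 2) * d) (hmiss : ∀ x ∈ Icc 0 d, r ^ 2 ≤ (x - p) ^ 2 + q ^ 2)
    (ht : t ∈ Icc 0 1) : r ^ 2 ≤ (t * d - p) ^ 2 + (2 * h * min t (1 - t) - q) ^ 2 := by
  obtain ⟨ht₀, ht₁⟩ := ht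
  set A := √(r ^ 2 - q ^ 2)
  have hA₀ : 0 ≤ A := sqrt_nonneg _
  have hA : A ^ 2 = r ^ 2 - q ^ 2 := sq_sqrt (by linarith)
  have hm := le_min ht₀ (sub_nonneg.2 ht₁)
  -- the chord `[p - A, p + A]` of the disk lies beyond one end of `[0, d]`
  have hchord : p + A ≤ 0 ∨ d ≤ p - A := by
    rcases le_or_gt p 0 with hp | hp
    · have := hmiss 0 ⟨le_rfl, hd⟩
      left; nlinarith
    rcases le_or_gt d p with hdp | hdp
    · have := hmiss d ⟨hd, le_rfl⟩
      right; nlinarith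
    · have := hmiss p ⟨hp.le, hdp.le⟩
      nlinarith
  rcases hchord with hpA | hpA
  · have := sq_add_sq_le_tent_of_add_nonpos hA₀ hpA (mul_nonneg ht₀ hd) hm
      (by nlinarith [min_le_left t (1 - t)]) hh
    linarith
  · have := sq_add_sq_le_tent_of_add_nonpos (p := d - p) (x := d - t * d) hA₀ (by linarith)
      (by nlinarith) hm (by nlinarith [min_le_right t (1 - t)]) hh
    nlinarith

lemma sq_le_tent {d p q r t : ℝ} (h₀ : 0 ≤ d) (h₁ : d ≤ 1 / 2) (hr : 1 / 2 ≤ r)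
    (ha : r ^ 2 ≤ p ^ 2 + q ^ 2) (hb : r ^ 2 ≤ (d - p) ^ 2 + q ^ 2) (hq : q < 1 / 8)
    (ht : t ∈ Icc 0 1) :
    r ^ 2 ≤ (t * d - p) ^ 2 + (2 * tentHeight d * min t (1 - t) - q) ^ 2 := by
  by_cases hmeet : ∃ x ∈ Icc 0 d, (x - p) ^ 2 + q ^ 2 < r ^ 2
  · obtain ⟨x, hx, hin⟩ := hmeet
    obtain ⟨c, hc, hcr, hcp, hcdp⟩ := exists_half_chord ha hb hx hin
    -- `q ^ 2 = r ^ 2 - c ^ 2 ≥ 1/4 - d ^ 2/4 ≥ 3/16`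
    have hq₀ : q ≤ 0 := by nlinarith
    exact sq_le_tent_of_half_chord hc hcp hcdp hcr
      (sq_le_neg_four_mul_tentHeight_mul h₀ (by linarith) hq₀ (by nlinarith)) ht
  push Not at hmeet
  rcases le_or_gt q 0 with hq₀ | hq₀
  · nlinarith [hmeet (t * d) ⟨mul_nonneg ht.1 h₀, by nlinarith [ht.2]⟩,
      mul_nonneg (tentHeight_nonneg d) (le_min ht.1 (sub_nonneg.2 ht.2))]
  · exact sq_le_tent_of_disjoint h₀ (by nlinarith)
      (two_mul_tentHeight_mul_le h₀ h₁ hq₀.le hq (sqrt_nonneg _)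
        (by rw [sq_sqrt (by nlinarith)]; nlinarith)) hmeet ht

section Plane

variable {E : Type*} [NormedAddCommGroup E] [InnerProductSpace ℝ E] [Fact (finrank ℝ E = 2)]

lemma exists_orientation_inner_rightAngleRotation_nonpos (x y : E) :
    ∃ o : Orientation ℝ E (Fin 2), ⟪o.rightAngleRotation x, y⟫ ≤ 0 := by
  have : FiniteDimensional ℝ E := .of_fact_finrank_eq_two
  let o : Orientation ℝ E (Fin 2) := (finBasisOfFinrankEq ℝ E Fact.out).orientation
  rcases le_total ⟪o.rightAngleRotation x, y⟫ 0 with h | h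
  · exact ⟨o, h⟩
  · exact ⟨-o, by rw [o.rightAngleRotation_neg_orientation, inner_neg_left]; linarith⟩

namespace Orientation

variable (o : Orientation ℝ E (Fin 2))

local notation "J" => o.rightAngleRotation

lemma add_smul_add_smul_mem_ball_iff {e : E} (he : ‖e‖ = 1) (a z : E) (x y : ℝ) {r : ℝ}
    (hr : 0 ≤ r) :
    a + x • e + y • J e ∈ ball z r ↔ (x - ⟪e, z - a⟫) ^ 2 + (y - ⟪J e, z - a⟫) ^ 2 < r ^ 2 := by
  set w := a + x • e + y • J e - z
  have hpyth : ⟪e, w⟫ ^ 2 + ⟪J e, w⟫ ^ 2 = ‖w‖ ^ 2 := by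
    simpa [he, o.inner_rightAngleRotation_left] using o.inner_sq_add_areaForm_sq e w
  have hx : ⟪e, w⟫ = x - ⟪e, z - a⟫ := by
    simp [w, inner_add_right, inner_sub_right, real_inner_smul_right, he]; ring
  have hy : ⟪J e, w⟫ = y - ⟪J e, z - a⟫ := by
    simp [w, inner_add_right, inner_sub_right, real_inner_smul_right, he]; ring
  rw [mem_ball, dist_eq_norm, ← hx, ← hy, hpyth, sq_lt_sq₀ (norm_nonneg _) hr]

lemma sq_le_of_add_smul_notMem_ball {a e z : E} (he : ‖e‖ = 1) (x : ℝ) {r : ℝ} (hr : 0 ≤ r)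
    (h : a + x • e ∉ ball z r) : r ^ 2 ≤ (x - ⟪e, z - a⟫) ^ 2 + ⟪J e, z - a⟫ ^ 2 := by
  have := (o.add_smul_add_smul_mem_ball_iff he a z x 0 hr).not.1 (by rwa [zero_smul, add_zero])
  simpa only [not_lt, zero_sub, neg_sq] using this

lemma sq_le_of_notMem_ball {a e z : E} (he : ‖e‖ = 1) {r : ℝ} (hr : 0 ≤ r)
    (h : a ∉ ball z r) : r ^ 2 ≤ ⟪e, z - a⟫ ^ 2 + ⟪J e, z - a⟫ ^ 2 := by
  simpa only [zero_sub, neg_sq] using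
    o.sq_le_of_add_smul_notMem_ball he 0 hr (by rwa [zero_smul, add_zero])

lemma sq_sub_le_inner_rightAngleRotation_sq {a e z : E} (he : ‖e‖ = 1) {d r : ℝ} (h₀ : 0 ≤ d)
    (hr : 0 ≤ r) (ha : a ∉ ball z r) (hb : a + d • e ∉ ball z r)
    (hmeet : (segment ℝ a (a + d • e) ∩ ball z r).Nonempty) :
    r ^ 2 - d ^ 2 / 4 ≤ ⟪J e, z - a⟫ ^ 2 := by
  obtain ⟨y, hy, hyr⟩ := hmeet
  rw [segment_eq_image'] at hy
  obtain ⟨θ, ⟨hθ₀, hθ₁⟩, rfl⟩ := hy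
  have hin := (o.add_smul_add_smul_mem_ball_iff he a z (θ * d) 0 hr).1
    (by simpa [smul_smul] using hyr)
  obtain ⟨c, hc, hcr, hcp, hcdp⟩ := exists_half_chord (o.sq_le_of_notMem_ball he hr ha)
    (o.sq_le_of_add_smul_notMem_ball he d hr hb) ⟨mul_nonneg hθ₀ h₀, mul_le_of_le_one_left h₀ hθ₁⟩
    (by simpa only [zero_sub, neg_sq] using hin)
  nlinarith

lemma tentPath_notMem_ball {a e z : E} (he : ‖e‖ = 1) {d r t : ℝ} (h₀ : 0 ≤ d)
    (h₁ : d ≤ 1 / 2) (hr : 1 / 2 ≤ r) (ha : a ∉ ball z r) (hb : a + d • e ∉ ball z r)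
    (hq : ⟪J e, z - a⟫ < 1 / 8) (ht : t ∈ Icc 0 1) :
    tentPath a (a + d • e) (tentHeight d • J e) t ∉ ball z r := by
  have hr₀ : 0 ≤ r := by linarith
  have hpath : tentPath a (a + d • e) (tentHeight d • J e) t
      = a + (t * d) • e + (2 * tentHeight d * min t (1 - t)) • J e := by
    simp only [tentPath, add_sub_cancel_left]; module
  rw [hpath, o.add_smul_add_smul_mem_ball_iff he _ _ _ _ hr₀, not_lt]
  exact sq_le_tent h₀ h₁ hr (o.sq_le_of_notMem_ball he hr₀ ha)
    (o.sq_le_of_add_smul_notMem_ball he d hr₀ hb) hq ht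

end Orientation

lemma exists_tent_avoiding_of_meets {a b z₁ z₂ : E} {r₁ r₂ : ℝ} (hz : dist z₁ z₂ < 1 / 2)
    (hr₁ : 1 / 2 ≤ r₁) (hr₂ : 1 / 2 ≤ r₂) (hab : dist a b ≤ 1 / 2)
    (ha : a ∉ ball z₁ r₁ ∪ ball z₂ r₂) (hb : b ∉ ball z₁ r₁ ∪ ball z₂ r₂)
    (hmeet : (segment ℝ a b ∩ ball z₁ r₁).Nonempty) :
    ∃ v, ⟪b - a, v⟫ = 0 ∧ ‖v‖ ≤ tentHeight (dist a b) ∧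
      ∀ t ∈ Icc (0 : ℝ) 1, tentPath a b v t ∉ ball z₁ r₁ ∪ ball z₂ r₂ := by
  have hne : a ≠ b := by
    rintro rfl
    obtain ⟨y, hy, hyr⟩ := hmeet
    rw [segment_same, mem_singleton_iff] at hy
    exact ha (.inl (hy ▸ hyr))
  set d := dist a b
  have hd : 0 < d := dist_pos.2 hne
  set e := d⁻¹ • (b - a)
  have he : ‖e‖ = 1 := by
    rw [norm_smul, norm_inv, Real.norm_of_nonneg hd.le, ← dist_eq_norm', inv_mul_cancel₀ hd.ne']
  have hbe : b = a + d • e := by simp [e, smul_smul, hd.ne']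
  -- orient the plane so that the apex of the tent is on the side of the line away from `z₁`
  obtain ⟨o, hq₁⟩ := exists_orientation_inner_rightAngleRotation_nonpos e (z₁ - a)
  rw [hbe] at hb hmeet ⊢
  have hchord := o.sq_sub_le_inner_rightAngleRotation_sq he hd.le (by linarith)
    (fun h => ha (.inl h)) (fun h => hb (.inl h)) hmeet
  have hq₁' : ⟪o.rightAngleRotation e, z₁ - a⟫ ≤ -3 / 8 := by nlinarith
  have hq₂ : ⟪o.rightAngleRotation e, z₂ - a⟫ < 1 / 8 := by
    have h := real_inner_le_norm (o.rightAngleRotation e) (z₂ - z₁)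
    rw [LinearIsometryEquiv.norm_map, he, one_mul, ← dist_eq_norm, dist_comm] at h
    rw [show z₂ - a = (z₂ - z₁) + (z₁ - a) by abel, inner_add_right]
    linarith
  refine ⟨tentHeight d • o.rightAngleRotation e, by simp [real_inner_smul_right],
    by simp [norm_smul, he, abs_of_nonneg (tentHeight_nonneg d)], fun t ht => ?_⟩
  rintro (h | h)
  · exact o.tentPath_notMem_ball he hd.le hab hr₁ (fun h => ha (.inl h)) (fun h => hb (.inl h))
      (by linarith) ht h
  · exact o.tentPath_notMem_ball he hd.le hab hr₂ (fun h => ha (.inr h)) (fun h => hb (.inr h))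
      hq₂ ht h

lemma exists_tent_avoiding {a b z₁ z₂ : E} {r₁ r₂ : ℝ} (hz : dist z₁ z₂ < 1 / 2)
    (hr₁ : 1 / 2 ≤ r₁) (hr₂ : 1 / 2 ≤ r₂) (hab : dist a b ≤ 1 / 2)
    (ha : a ∉ ball z₁ r₁ ∪ ball z₂ r₂) (hb : b ∉ ball z₁ r₁ ∪ ball z₂ r₂) :
    ∃ v, ⟪b - a, v⟫ = 0 ∧ ‖v‖ ≤ tentHeight (dist a b) ∧
      ∀ t ∈ Icc (0 : ℝ) 1, tentPath a b v t ∉ ball z₁ r₁ ∪ ball z₂ r₂ := by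
  by_cases h₁ : (segment ℝ a b ∩ ball z₁ r₁).Nonempty
  · exact exists_tent_avoiding_of_meets hz hr₁ hr₂ hab ha hb h₁
  by_cases h₂ : (segment ℝ a b ∩ ball z₂ r₂).Nonempty
  · rw [union_comm] at ha hb ⊢
    exact exists_tent_avoiding_of_meets (dist_comm z₁ z₂ ▸ hz) hr₂ hr₁ hab ha hb h₂
  refine ⟨0, inner_zero_right _, by simpa using tentHeight_nonneg _, fun t ht hmem => ?_⟩
  have hseg : tentPath a b 0 t ∈ segment ℝ a b := by
    rw [segment_eq_image']; exact ⟨t, ht, by simp [tentPath]⟩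
  rcases hmem with hmem | hmem
  exacts [h₁ ⟨_, hseg, hmem⟩, h₂ ⟨_, hseg, hmem⟩]

end Plane

theorem avoid_two_disks_general (z₁ z₂ : EuclideanSpace ℝ (Fin 2)) (r₁ r₂ : ℝ)
    (hr₁ : r₁ ∈ Set.Icc (1/2 : ℝ) 1) (hr₂ : r₂ ∈ Set.Icc (1/2 : ℝ) 1)
    (hz : dist z₁ z₂ < 1/2)
    (a b : EuclideanSpace ℝ (Fin 2))
    (ha : a ∉ ball z₁ r₁ ∪ ball z₂ r₂) (hb : b ∉ ball z₁ r₁ ∪ ball z₂ r₂)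
    (hab : dist a b < 1/2) :
    ∃ C : ℝ → EuclideanSpace ℝ (Fin 2),
      ContinuousOn C (Set.Icc 0 1) ∧ C 0 = a ∧ C 1 = b ∧
      (∀ t ∈ Set.Icc (0:ℝ) 1, C t ∉ ball z₁ r₁ ∪ ball z₂ r₂) ∧
      eVariationOn C (Set.Icc 0 1) ≤
        ENNReal.ofReal (Real.arcsin (2 * dist a b) - dist a b) := by
  obtain ⟨v, hv, hvh, havoid⟩ := exists_tent_avoiding hz hr₁.1 hr₂.1 hab.le ha hb
  refine ⟨tentPath a b v, (lipschitzWith_tentPath hv).continuous.continuousOn,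
    tentPath_zero a b v, tentPath_one a b v, havoid, ?_⟩
  calc eVariationOn (tentPath a b v) (Icc 0 1)
      ≤ ENNReal.ofReal √(dist a b ^ 2 + 4 * ‖v‖ ^ 2) := by
        simpa only [dist_eq_norm'] using eVariationOn_tentPath_le hv
  _ ≤ _ := ENNReal.ofReal_le_ofReal
        (sqrt_sq_add_four_mul_sq_le_arcsin_sub dist_nonneg hab.le (norm_nonneg v) hvh)

/-- Avoiding two overlapping disks in the plane: there is a rectifiable curve from `a`
to `b` avoiding the union of the disks, of length at most `arcsin(2‖a-b‖) - ‖a-b‖`. -/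
theorem avoid_two_disks (z₁ z₂ : EuclideanSpace ℝ (Fin 2)) (r₁ r₂ : ℝ)
    (hr₁ : r₁ ∈ Set.Icc (1/2 : ℝ) 1) (hr₂ : r₂ ∈ Set.Icc (1/2 : ℝ) 1)
    (hz : dist z₁ z₂ < 1/2)
    (a b : EuclideanSpace ℝ (Fin 2))
    (ha : a ∉ ball z₁ r₁ ∪ ball z₂ r₂) (hb : b ∉ ball z₁ r₁ ∪ ball z₂ r₂)
    (hab : dist a b < 1/2)
    (m : EuclideanSpace ℝ (Fin 2)) (hm : m ∈ ball z₁ r₁ ∩ ball z₂ r₂)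
    (hcol : ¬ Collinear ℝ ({m, a, b} : Set (EuclideanSpace ℝ (Fin 2)))) :
    ∃ C : ℝ → EuclideanSpace ℝ (Fin 2),
      ContinuousOn C (Set.Icc 0 1) ∧ C 0 = a ∧ C 1 = b ∧
      (∀ t ∈ Set.Icc (0:ℝ) 1, C t ∉ ball z₁ r₁ ∪ ball z₂ r₂) ∧
      eVariationOn C (Set.Icc 0 1) ≤
        ENNReal.ofReal (Real.arcsin (2 * dist a b) - dist a b) :=
  avoid_two_disks_general z₁ z₂ r₁ r₂ hr₁ hr₂ hz a b ha hb hab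
end

section
/- For every r ≥ 1/2 and every x with 0 ≤ x ≤ 2r, we have 2r·arcsin(x/(2r)) ≤ arcsin(x) whenever x ≤ 1; more generally, the function r ↦ 2r·arcsin(x/(2r)) is monotonically decreasing in r for fixed x ≥ 0 (on the domain where x/(2r) ≤ 1). -/
/-!
Writing `v = x / (2r)` and `t = r / s`, the claim `2s·arcsin(x/(2s)) ≤ 2r·arcsin(x/(2r))` becomes
`arcsin (t v) ≤ t arcsin v` for `t, v ∈ [0, 1]`. With `θ = arcsin v ∈ [0, π/2]` this follows from
`t sin θ ≤ sin (t θ)`, which is concavity of `sin` on `[0, π]` together with `sin 0 = 0`.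
The bound by `arcsin x` is the case `r = 1/2`.
-/

open Real Set

theorem ConcaveOn.smul_le_map_smul {𝕜 E β : Type*} [Ring 𝕜] [PartialOrder 𝕜] [IsOrderedRing 𝕜]
    [AddCommGroup E] [Module 𝕜 E] [AddCommGroup β] [PartialOrder β] [IsOrderedAddMonoid β]
    [Module 𝕜 β] [PosSMulMono 𝕜 β] {s : Set E} {f : E → β} (hf : ConcaveOn 𝕜 s f)
    (h₀ : (0 : E) ∈ s) (hf₀ : 0 ≤ f 0) {x : E} (hx : x ∈ s) {t : 𝕜} (ht₀ : 0 ≤ t) (ht₁ : t ≤ 1) :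
    t • f x ≤ f (t • x) := by
  have h := hf.2 hx h₀ ht₀ (sub_nonneg.2 ht₁) (add_sub_cancel t 1)
  rw [smul_zero, add_zero] at h
  exact (le_add_of_nonneg_right (smul_nonneg (sub_nonneg.2 ht₁) hf₀)).trans h

theorem Real.mul_sin_le_sin_mul {t θ : ℝ} (ht₀ : 0 ≤ t) (ht₁ : t ≤ 1) (hθ₀ : 0 ≤ θ) (hθ : θ ≤ π) :
    t * sin θ ≤ sin (t * θ) :=
  strictConcaveOn_sin_Icc.concaveOn.smul_le_map_smul ⟨le_rfl, pi_pos.le⟩ sin_zero.ge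
    ⟨hθ₀, hθ⟩ ht₀ ht₁

theorem Real.arcsin_mul_le_mul_arcsin {t v : ℝ} (ht₀ : 0 ≤ t) (ht₁ : t ≤ 1) (hv₀ : 0 ≤ v)
    (hv₁ : v ≤ 1) : arcsin (t * v) ≤ t * arcsin v := by
  have hθ₀ : 0 ≤ arcsin v := arcsin_nonneg.2 hv₀
  have hθ : arcsin v ≤ π / 2 := arcsin_le_pi_div_two v
  have htv : t * v ≤ 1 := mul_le_one₀ ht₁ hv₀ hv₁
  rw [arcsin_le_iff_le_sin ⟨by nlinarith, htv⟩ ⟨by nlinarith [pi_pos], by nlinarith⟩]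
  calc t * v = t * sin (arcsin v) := by rw [sin_arcsin (by linarith) hv₁]
    _ ≤ sin (t * arcsin v) := mul_sin_le_sin_mul ht₀ ht₁ hθ₀ (by linarith [pi_pos])

theorem Real.mul_arcsin_div_le {x r s : ℝ} (hx : 0 ≤ x) (hr : 0 < r) (hrs : r ≤ s) (hxr : x ≤ r) :
    s * arcsin (x / s) ≤ r * arcsin (x / r) := by
  have hs : 0 < s := hr.trans_le hrs
  have hscale : r / s * (x / r) = x / s := by field_simp
  calc s * arcsin (x / s) = s * arcsin (r / s * (x / r)) := by rw [hscale]
    _ ≤ s * (r / s * arcsin (x / r)) := by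
      gcongr
      exact arcsin_mul_le_mul_arcsin (div_nonneg hr.le hs.le) ((div_le_one hs).2 hrs)
        (div_nonneg hx hr.le) ((div_le_one hr).2 hxr)
    _ = r * arcsin (x / r) := by field_simp

/-- Arc-length of a circular arc of radius `r` over a chord of length `x`:
`2r·arcsin(x/(2r)) ≤ arcsin x` for `r ≥ 1/2` and `0 ≤ x ≤ min (2r) 1`; more
generally `r ↦ 2r·arcsin(x/(2r))` is monotonically decreasing in `r`. -/
theorem arc_length_antitone_in_radius :
    (∀ r : ℝ, 1/2 ≤ r → ∀ x : ℝ, 0 ≤ x → x ≤ 2 * r → x ≤ 1 →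
      2 * r * Real.arcsin (x / (2 * r)) ≤ Real.arcsin x) ∧
    (∀ x : ℝ, 0 ≤ x → ∀ r s : ℝ, 0 < r → r ≤ s → x ≤ 2 * r →
      2 * s * Real.arcsin (x / (2 * s)) ≤ 2 * r * Real.arcsin (x / (2 * r))) := by
  have antitone : ∀ x : ℝ, 0 ≤ x → ∀ r s : ℝ, 0 < r → r ≤ s → x ≤ 2 * r →
      2 * s * Real.arcsin (x / (2 * s)) ≤ 2 * r * Real.arcsin (x / (2 * r)) :=
    fun x hx r s hr hrs hxr => Real.mul_arcsin_div_le hx (by linarith) (by linarith) hxr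
  refine ⟨fun r hr x hx _ hx₁ => ?_, antitone⟩
  simpa using antitone x hx (1 / 2) r one_half_pos hr (by linarith)
end

section
/- Let x, y, m ∈ ℝ³ with ‖x − y‖, ‖x − m‖, ‖y − m‖ < 1/2, and let a, b ∈ ℝ³ with dist(a, {x,y}) ≥ 1, dist(b, {x,y}) ≥ 1 and ‖a − b‖ < 1/2. If a, b, m are collinear, then the straight segment from a to b is disjoint from the open balls of radius 1 around x and around y. -/
/-!
Of three collinear points one lies between the other two. The point `m` cannot lie between `a`
and `b`, since then `dist a x ≤ dist a b + dist m x < 1`. Otherwise `b ∈ [a, m]` (or `a ∈ [b, m]`),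
and a point of `[a, b]` inside the convex ball `U₁(x)` would drag `b` (or `a`) into it along with `m`.
-/

open Metric

section

variable {E : Type*} [NormedAddCommGroup E] [NormedSpace ℝ E]

theorem disjoint_segment_ball_of_wbtw {a b m c : E} {r : ℝ} (hw : Wbtw ℝ a b m)
    (hm : m ∈ ball c r) (hb : b ∉ ball c r) : Disjoint (segment ℝ a b) (ball c r) := by
  refine Set.disjoint_left.2 fun p hp hpc => hb ?_
  have hpbm : Wbtw ℝ p b m := hw.trans_left_right (mem_segment_iff_wbtw.1 hp)
  exact (convex_ball c r).segment_subset hpc hm hpbm.mem_segment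

theorem dist_le_dist_of_wbtw {a b m : E} (hw : Wbtw ℝ b m a) : dist a m ≤ dist a b := by
  have h := hw.dist_add_dist
  rw [dist_comm m a, dist_comm b a] at h
  linarith [dist_nonneg (x := b) (y := m)]

theorem disjoint_segment_ball_of_collinear {a b m c : E} {r : ℝ}
    (hmc : dist m c < r / 2) (hab : dist a b < r / 2) (hac : r ≤ dist a c) (hbc : r ≤ dist b c)
    (hcol : Collinear ℝ ({a, b, m} : Set E)) : Disjoint (segment ℝ a b) (ball c r) := by
  have hm : m ∈ ball c r := mem_ball.2 (by linarith [dist_nonneg (x := a) (y := b)])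
  have hb : b ∉ ball c r := fun h => (mem_ball.1 h).not_ge hbc
  have ha : a ∉ ball c r := fun h => (mem_ball.1 h).not_ge hac
  rcases hcol.wbtw_or_wbtw_or_wbtw with hw | hw | hw
  · exact disjoint_segment_ball_of_wbtw hw hm hb
  · have ham := dist_le_dist_of_wbtw hw
    linarith [dist_triangle a m c]
  · rw [segment_symm]
    exact disjoint_segment_ball_of_wbtw hw.symm hm ha

end

theorem collinear_segment_avoids_balls_general
    (x y m a b : EuclideanSpace ℝ (Fin 3))
    (hxm : dist x m < 1/2) (hym : dist y m < 1/2)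
    (hax : 1 ≤ dist a x) (hay : 1 ≤ dist a y)
    (hbx : 1 ≤ dist b x) (hby : 1 ≤ dist b y)
    (hab : dist a b < 1/2)
    (hcol : Collinear ℝ ({a, b, m} : Set (EuclideanSpace ℝ (Fin 3)))) :
    Disjoint (segment ℝ a b) (ball x 1) ∧ Disjoint (segment ℝ a b) (ball y 1) :=
  ⟨disjoint_segment_ball_of_collinear (by rwa [dist_comm]) hab hax hbx hcol,
    disjoint_segment_ball_of_collinear (by rwa [dist_comm]) hab hay hby hcol⟩

/-- If `a`, `b`, `m` are collinear, `m` is within `1/2` of `x` and `y`, the points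
`a`, `b` are at distance at least `1` from both `x` and `y`, and `‖a-b‖ < 1/2`, then
the segment from `a` to `b` avoids the open unit balls around `x` and around `y`. -/
theorem collinear_segment_avoids_balls
    (x y m a b : EuclideanSpace ℝ (Fin 3))
    (hxy : dist x y < 1/2) (hxm : dist x m < 1/2) (hym : dist y m < 1/2)
    (hax : 1 ≤ dist a x) (hay : 1 ≤ dist a y)
    (hbx : 1 ≤ dist b x) (hby : 1 ≤ dist b y)
    (hab : dist a b < 1/2)
    (hcol : Collinear ℝ ({a, b, m} : Set (EuclideanSpace ℝ (Fin 3)))) :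
    Disjoint (segment ℝ a b) (ball x 1) ∧ Disjoint (segment ℝ a b) (ball y 1) :=
  collinear_segment_avoids_balls_general x y m a b hxm hym hax hay hbx hby hab hcol
end

section
/- Let C₁, C₂ : S¹ → ℝ³ be two closed curves with dist(im C₁, im C₂) ≥ 1 such that C₁ and C₂ are topologically linked (nonzero linking number). Then length(C₁) ≥ 2π. -/
/-!
Suppose `C₁` has length `< 2π`. If `C₂` met the convex hull of `C₁` at a point `z`, look at the
angle that `C₁` subtends at `z`: since `C₁` stays at distance `≥ 1` from `z`, the angle between
nearby points of `C₁` is at most their distance up to a factor `1 + o(1)`, so the closed curve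
sweeps out total angle `< 2π`. Horn's argument (cut the curve into two halves of angular length
`< π` at `p` and `q`; no point of the curve is orthogonal to the bisector of `p` and `q`) then
puts `C₁` in an open half-space through `z`, contradicting that `z` lies in its convex hull.
Hence `C₂` avoids the convex hull of `C₁`, and the straight-line homotopy from `C₁` to one of its
points is a null-homotopy of `C₁` in the complement of `C₂`.
-/

open Set Real InnerProductGeometry Filter Topology
open scoped RealInnerProductSpace

section

variable {E : Type*} [NormedAddCommGroup E] [InnerProductSpace ℝ E]

namespace InnerProductGeometry

theorem two_mul_sin_angle_div_two_le_norm_sub {x y : E} (hx : 1 ≤ ‖x‖) (hy : 1 ≤ ‖y‖) :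
    2 * sin (angle x y / 2) ≤ ‖x - y‖ := by
  set θ := angle x y
  have hcos : cos θ = 1 - 2 * sin (θ / 2) ^ 2 := by
    have h := cos_two_mul' (θ / 2)
    rw [mul_div_cancel₀ θ two_ne_zero] at h
    linarith [cos_sq_add_sin_sq (θ / 2)]
  have hsin : 0 ≤ sin (θ / 2) :=
    sin_nonneg_of_nonneg_of_le_pi (by linarith [angle_nonneg x y])
      (by linarith [angle_le_pi x y, pi_pos])
  have hlaw := norm_sub_sq_eq_norm_sq_add_norm_sq_sub_two_mul_norm_mul_norm_mul_cos_angle x y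
  have hxy : 1 ≤ ‖x‖ * ‖y‖ := one_le_mul_of_one_le_of_one_le hx hy
  nlinarith [sq_nonneg (‖x‖ - ‖y‖), sq_nonneg (sin (θ / 2)), norm_nonneg (x - y)]

theorem one_sub_mul_angle_le_norm_sub {x y : E} (hx : 1 ≤ ‖x‖) (hy : 1 ≤ ‖y‖) :
    (1 - π ^ 2 * ‖x - y‖ ^ 2 / 96) * angle x y ≤ ‖x - y‖ := by
  set θ := angle x y
  have hchord := two_mul_sin_angle_div_two_le_norm_sub hx hy
  have hθ0 : 0 ≤ θ := angle_nonneg x y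
  have hjordan := mul_le_sin (x := θ / 2) (by linarith) (by linarith [angle_le_pi x y])
  have hcubic := sin_ge_sub_cube (x := θ / 2) (by linarith)
  have hθc : θ ≤ π / 2 * ‖x - y‖ := by
    rw [show 2 / π * (θ / 2) = θ / π by ring, div_le_iff₀ pi_pos] at hjordan
    nlinarith [pi_pos]
  have hθsq : θ ^ 2 ≤ π ^ 2 * ‖x - y‖ ^ 2 / 4 := by
    nlinarith
  nlinarith

theorem angle_le_sum_range_angle (x : ℕ → E) (h₀ : x 0 ≠ 0) (n : ℕ) :
    angle (x 0) (x n) ≤ ∑ i ∈ Finset.range n, angle (x i) (x (i + 1)) := by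
  induction n with
  | zero => simp [angle_self h₀]
  | succ n ih =>
    rw [Finset.sum_range_succ]
    exact (angle_le_angle_add_angle _ (x n) _).trans (by gcongr)

theorem angle_add_angle_eq_pi_of_inner_eq_zero {x y z : E} (hy : y ≠ 0) (hz : z ≠ 0)
    (h : ⟪x, ‖y‖⁻¹ • y + ‖z‖⁻¹ • z⟫ = 0) : angle y x + angle x z = π := by
  have hyz : angle x (‖y‖⁻¹ • y) = angle x (-(‖z‖⁻¹ • z)) := by
    rw [inner_add_right] at h
    simp only [angle, norm_neg, norm_smul, norm_inv, norm_norm,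
      inv_mul_cancel₀ (norm_ne_zero_iff.2 hy), inv_mul_cancel₀ (norm_ne_zero_iff.2 hz),
      inner_neg_right, eq_neg_of_add_eq_zero_left h]
  rw [angle_neg_right, angle_smul_right_of_pos _ _ (inv_pos.2 (norm_pos_iff.2 hy)),
    angle_smul_right_of_pos _ _ (inv_pos.2 (norm_pos_iff.2 hz)), angle_comm] at hyz
  linarith

end InnerProductGeometry

theorem eVariationOn_Icc_add_Icc {α X : Type*} [LinearOrder α] [PseudoEMetricSpace X]
    (f : α → X) {a b c : α} (hab : a ≤ b) (hbc : b ≤ c) :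
    eVariationOn f (Icc a b) + eVariationOn f (Icc b c) = eVariationOn f (Icc a c) := by
  simpa using eVariationOn.Icc_add_Icc f hab hbc (mem_univ b)

theorem exists_monotone_partition_dist_le {X : Type*} [PseudoMetricSpace X] {f : ℝ → X}
    {a b : ℝ} (hab : a ≤ b) (hf : ContinuousOn f (Icc a b)) {ε : ℝ} (hε : 0 < ε) :
    ∃ (n : ℕ) (u : ℕ → ℝ), Monotone u ∧ (∀ i, u i ∈ Icc a b) ∧ u 0 = a ∧ u n = b ∧
      ∀ i, dist (f (u (i + 1))) (f (u i)) ≤ ε := by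
  obtain ⟨δ, hδ, hfδ⟩ := Metric.uniformContinuousOn_iff_le.1
    (isCompact_Icc.uniformContinuousOn_of_continuous hf) ε hε
  set u : ℕ → ℝ := fun i ↦ min b (a + i * δ)
  have hmem : ∀ i, u i ∈ Icc a b := fun i ↦ ⟨le_min hab (by simp only [le_add_iff_nonneg_right]; positivity), min_le_left _ _⟩
  refine ⟨⌈(b - a) / δ⌉₊, u, fun i j hij ↦ ?_, hmem, by simp [u, hab], ?_,
    fun i ↦ hfδ _ (hmem _) _ (hmem _) ?_⟩
  · simp only [u]; gcongr
  · refine min_eq_left ?_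
    have := (div_le_iff₀ hδ).1 (Nat.le_ceil ((b - a) / δ))
    linarith
  · refine (abs_min_sub_min_le_max _ _ _ _).trans ?_
    simp [add_one_mul, abs_of_pos hδ, hδ.le]

theorem ofReal_angle_le_eVariationOn {γ : ℝ → E} {a b : ℝ} (hab : a ≤ b)
    (hγ : ContinuousOn γ (Icc a b)) (hγ₁ : ∀ t ∈ Icc a b, 1 ≤ ‖γ t‖) :
    ENNReal.ofReal (angle (γ a) (γ b)) ≤ eVariationOn γ (Icc a b) := by
  set θ := angle (γ a) (γ b)
  have hbound : ∀ ε ∈ Ioc (0 : ℝ) 1,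
      ENNReal.ofReal ((1 - π ^ 2 * ε ^ 2 / 96) * θ) ≤ eVariationOn γ (Icc a b) := by
    rintro ε ⟨hε, hε₁⟩
    obtain ⟨n, u, hu, hmem, rfl, rfl, hstep⟩ := exists_monotone_partition_dist_le hab hγ hε
    have hfac : 0 ≤ 1 - π ^ 2 * ε ^ 2 / 96 := by
      have hπ : π ^ 2 ≤ 16 := by nlinarith [pi_lt_four, pi_pos]
      nlinarith [pow_le_one₀ hε.le hε₁ (n := 2)]
    have hterm : ∀ i, (1 - π ^ 2 * ε ^ 2 / 96) * angle (γ (u i)) (γ (u (i + 1))) ≤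
        dist (γ (u (i + 1))) (γ (u i)) := fun i ↦ by
      rw [dist_comm, dist_eq_norm]
      refine le_trans ?_ (one_sub_mul_angle_le_norm_sub (hγ₁ _ (hmem i)) (hγ₁ _ (hmem (i + 1))))
      have : ‖γ (u i) - γ (u (i + 1))‖ ≤ ε := by rw [← dist_eq_norm, dist_comm]; exact hstep i
      gcongr
      exact angle_nonneg _ _
    calc ENNReal.ofReal ((1 - π ^ 2 * ε ^ 2 / 96) * θ)
        ≤ ENNReal.ofReal (∑ i ∈ Finset.range n, dist (γ (u (i + 1))) (γ (u i))) := by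
          refine ENNReal.ofReal_le_ofReal ?_
          calc (1 - π ^ 2 * ε ^ 2 / 96) * θ
              ≤ (1 - π ^ 2 * ε ^ 2 / 96) * ∑ i ∈ Finset.range n, angle (γ (u i)) (γ (u (i + 1))) :=
                mul_le_mul_of_nonneg_left (angle_le_sum_range_angle (γ ∘ u)
                  (norm_pos_iff.1 (one_pos.trans_le (hγ₁ _ (hmem 0)))) n) hfac
            _ ≤ _ := by rw [Finset.mul_sum]; exact Finset.sum_le_sum fun i _ ↦ hterm i
      _ = ∑ i ∈ Finset.range n, edist (γ (u (i + 1))) (γ (u i)) := by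
          rw [ENNReal.ofReal_sum_of_nonneg fun i _ ↦ dist_nonneg]; simp [edist_dist]
      _ ≤ eVariationOn γ (Icc (u 0) (u n)) := eVariationOn.sum_le hu hmem
  have hlim : Tendsto (fun ε : ℝ ↦ ENNReal.ofReal ((1 - π ^ 2 * ε ^ 2 / 96) * θ)) (𝓝[>] 0)
      (𝓝 (ENNReal.ofReal θ)) := by
    refine tendsto_nhdsWithin_of_tendsto_nhds ?_
    have hc : Continuous fun ε : ℝ ↦ ENNReal.ofReal ((1 - π ^ 2 * ε ^ 2 / 96) * θ) :=
      ENNReal.continuous_ofReal.comp (by fun_prop)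
    simpa using hc.tendsto 0
  exact le_of_tendsto hlim (eventually_of_mem (Ioc_mem_nhdsGT one_pos) hbound)

theorem ofReal_angle_add_angle_le_eVariationOn {γ : ℝ → E} {r s t : ℝ} (hrs : r ≤ s)
    (hst : s ≤ t) (hγ : ContinuousOn γ (Icc r t)) (hγ₁ : ∀ x ∈ Icc r t, 1 ≤ ‖γ x‖) :
    ENNReal.ofReal (angle (γ r) (γ s) + angle (γ s) (γ t)) ≤ eVariationOn γ (Icc r t) := by
  have hleft : Icc r s ⊆ Icc r t := Icc_subset_Icc_right hst
  have hright : Icc s t ⊆ Icc r t := Icc_subset_Icc_left hrs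
  rw [ENNReal.ofReal_add (angle_nonneg _ _) (angle_nonneg _ _),
    ← eVariationOn_Icc_add_Icc γ hrs hst]
  exact add_le_add
    (ofReal_angle_le_eVariationOn hrs (hγ.mono hleft) fun x hx ↦ hγ₁ x (hleft hx))
    (ofReal_angle_le_eVariationOn hst (hγ.mono hright) fun x hx ↦ hγ₁ x (hright hx))

theorem BoundedVariationOn.continuousOn_eVariationOn_Icc {X : Type*} [PseudoMetricSpace X]
    {f : ℝ → X} {a b : ℝ} (hf : BoundedVariationOn f (Icc a b)) (hc : ContinuousOn f (Icc a b)) :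
    ContinuousOn (fun t ↦ eVariationOn f (Icc a t)) (Icc a b) := by
  rcases lt_or_ge b a with hba | hab
  · simp [Icc_eq_empty_of_lt hba]
  have ha : a ∈ Icc a b := left_mem_Icc.2 hab
  have heq : EqOn (fun t ↦ ENNReal.ofReal (variationOnFromTo f (Icc a b) a t))
      (fun t ↦ eVariationOn f (Icc a t)) (Icc a b) := by
    rintro t ⟨hat, htb⟩
    dsimp only
    rw [variationOnFromTo.eq_of_le _ _ hat, inter_eq_right.2 (Icc_subset_Icc_right htb),
      ENNReal.ofReal_toReal (hf.mono (Icc_subset_Icc_right htb))]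
  refine (ENNReal.continuous_ofReal.comp_continuousOn fun x hx ↦ ?_).congr heq.symm
  have hleft := variationOnFromTo.tendsto_left ha hx hf.locallyBoundedVariationOn
    ((hc x hx).mono inter_subset_left)
  have hright := variationOnFromTo.tendsto_right ha hx hf.locallyBoundedVariationOn
    ((hc x hx).mono inter_subset_left)
  rw [dist_self, sub_zero] at hleft
  rw [dist_self, add_zero] at hright
  rw [← continuousWithinAt_sdiff_self, sdiff_eq, ← Iio_union_Ioi, inter_union_distrib_left]
  exact ContinuousWithinAt.union hleft hright

theorem BoundedVariationOn.exists_eVariationOn_Icc_eq_half {X : Type*} [PseudoMetricSpace X]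
    {f : ℝ → X} {a b : ℝ} (hab : a ≤ b) (hf : BoundedVariationOn f (Icc a b))
    (hc : ContinuousOn f (Icc a b)) :
    ∃ c ∈ Icc a b, eVariationOn f (Icc a c) = eVariationOn f (Icc a b) / 2 ∧
      eVariationOn f (Icc c b) = eVariationOn f (Icc a b) / 2 := by
  have h0 : eVariationOn f (Icc a a) = 0 := by
    rw [Icc_self]; exact eVariationOn.subsingleton f subsingleton_singleton
  obtain ⟨c, hc, hhalf⟩ := intermediate_value_Icc hab (hf.continuousOn_eVariationOn_Icc hc)
    ⟨by simp only [h0]; exact zero_le, ENNReal.half_le_self⟩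
  refine ⟨c, hc, hhalf, ?_⟩
  rw [← ENNReal.add_right_inj (ENNReal.div_ne_top hf two_ne_zero), ENNReal.add_halves, ← hhalf]
  exact eVariationOn_Icc_add_Icc f hc.1 hc.2

/-- Horn's lemma, for curves outside the open unit ball instead of on the unit sphere. -/
theorem exists_forall_inner_pos_of_eVariationOn_lt {γ : ℝ → E} {a b : ℝ} (hab : a ≤ b)
    (hγ : ContinuousOn γ (Icc a b)) (hγab : γ a = γ b) (hγ₁ : ∀ t ∈ Icc a b, 1 ≤ ‖γ t‖)
    (hlen : eVariationOn γ (Icc a b) < ENNReal.ofReal (2 * π)) :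
    ∃ u, ∀ t ∈ Icc a b, 0 < ⟪γ t, u⟫ := by
  set V := eVariationOn γ (Icc a b)
  have hV : V / 2 < ENNReal.ofReal π := by
    rw [ENNReal.div_lt_iff (by simp) (by simp), ← ENNReal.ofReal_ofNat 2,
      ← ENNReal.ofReal_mul pi_pos.le, mul_comm]
    exact hlen
  have hangles : ∀ r s t, a ≤ r → r ≤ s → s ≤ t → t ≤ b →
      ENNReal.ofReal (angle (γ r) (γ s) + angle (γ s) (γ t)) ≤ eVariationOn γ (Icc r t) :=
    fun r s t har hrs hst htb ↦ ofReal_angle_add_angle_le_eVariationOn hrs hst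
      (hγ.mono (Icc_subset_Icc har htb)) fun x hx ↦ hγ₁ x (Icc_subset_Icc har htb hx)
  obtain ⟨c, hc, hac, hcb⟩ :=
    BoundedVariationOn.exists_eVariationOn_Icc_eq_half hab hlen.ne_top hγ
  have hne0 : ∀ t ∈ Icc a b, γ t ≠ 0 := fun t ht ↦ norm_pos_iff.1 (one_pos.trans_le (hγ₁ t ht))
  obtain ⟨u, hne⟩ : ∃ u, ∀ t ∈ Icc a b, ⟪γ t, u⟫ ≠ 0 := by
    refine ⟨‖γ a‖⁻¹ • γ a + ‖γ c‖⁻¹ • γ c, fun t ht h0 ↦ ?_⟩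
    have hπ :=
      angle_add_angle_eq_pi_of_inner_eq_zero (hne0 a (left_mem_Icc.2 hab)) (hne0 c hc) h0
    refine (hV.trans_le' ?_).false
    rcases le_total t c with htc | hct
    · rw [← hac, ← hπ]
      exact hangles a t c le_rfl ht.1 htc hc.2
    · rw [← hcb, ← hπ, add_comm, angle_comm, angle_comm (γ a), hγab]
      exact hangles c t b hc.1 hct ht.2 le_rfl
  wlog hpos : 0 < ⟪γ a, u⟫ generalizing u
  · refine this (-u) (fun t ht ↦ by simpa [inner_neg_right] using hne t ht) ?_
    rw [inner_neg_right, neg_pos]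
    exact (hne a (left_mem_Icc.2 hab)).lt_of_le (not_lt.1 hpos)
  refine ⟨u, fun t ht ↦ (hne t ht).lt_or_gt.resolve_left fun hneg ↦ ?_⟩
  obtain ⟨s, hs, hs0⟩ := isPreconnected_Icc.intermediate_value ht (left_mem_Icc.2 hab)
    (hγ.inner continuousOn_const) ⟨hneg.le, hpos.le⟩
  exact hne s hs hs0

theorem notMem_convexHull_of_eVariationOn_lt {γ : ℝ → E} {a b : ℝ} (hab : a ≤ b)
    (hγ : ContinuousOn γ (Icc a b)) (hγab : γ a = γ b) {z : E}
    (hz : ∀ t ∈ Icc a b, 1 ≤ dist (γ t) z)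
    (hlen : eVariationOn γ (Icc a b) < ENNReal.ofReal (2 * π)) :
    z ∉ convexHull ℝ (γ '' Icc a b) := by
  have hvar : eVariationOn (fun t ↦ γ t - z) (Icc a b) = eVariationOn γ (Icc a b) := by
    simp only [eVariationOn, edist_sub_right]
  obtain ⟨u, hu⟩ := exists_forall_inner_pos_of_eVariationOn_lt (γ := fun t ↦ γ t - z) hab
    (hγ.sub continuousOn_const) (by simp only [hγab])
    (fun t ht ↦ by simpa [dist_eq_norm] using hz t ht) (hvar ▸ hlen)
  have hK : convexHull ℝ (γ '' Icc a b) ⊆ {x | ⟪u, z⟫ < ⟪u, x⟫} := by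
    refine convexHull_min ?_ (convex_halfSpace_gt (innerₛₗ ℝ u).isLinear _)
    rintro _ ⟨t, ht, rfl⟩
    show ⟪u, z⟫ < ⟪u, γ t⟫
    rw [← sub_pos, ← inner_sub_right, real_inner_comm]
    exact hu t ht
  exact fun hzK ↦ lt_irrefl ⟪u, z⟫ (hK hzK)

theorem Function.Periodic.exists_homotopy_const_of_convex {F : Type*} [AddCommGroup F]
    [Module ℝ F] [TopologicalSpace F] [IsTopologicalAddGroup F] [ContinuousSMul ℝ F]
    {C : ℝ → F} {c : ℝ} (hper : Periodic C c) (hC : Continuous C) {K : Set F}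
    (hK : Convex ℝ K) (hCK : ∀ t, C t ∈ K) :
    ∃ H : ℝ → ℝ → F, Continuous (Function.uncurry H) ∧ (∀ t, H 0 t = C t) ∧
      (∀ s, Periodic (H s) c) ∧ (∀ s t, H s t ∈ K) ∧ ∃ x, ∀ t, H 1 t = x := by
  refine ⟨fun s t ↦ C t + (projIcc (0 : ℝ) 1 zero_le_one s : ℝ) • (C 0 - C t), ?_,
    fun t ↦ by simp, fun s t ↦ by simp only [hper t],
    fun s t ↦ hK.add_smul_sub_mem (hCK t) (hCK 0) (projIcc _ _ _ s).2, C 0, fun t ↦ by simp⟩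
  fun_prop

end

theorem gehring_problem_general
    (C₁ C₂ : ℝ → EuclideanSpace ℝ (Fin 3))
    (h₁ : Continuous C₁)
    (hper₁ : Function.Periodic C₁ 1)
    (hdist : ∀ s t : ℝ, 1 ≤ dist (C₁ s) (C₂ t))
    (hlink : ¬ ∃ H : ℝ → ℝ → EuclideanSpace ℝ (Fin 3),
      Continuous (Function.uncurry H) ∧
      (∀ t, H 0 t = C₁ t) ∧
      (∀ s, Function.Periodic (H s) 1) ∧
      (∀ s t, H s t ∉ Set.range C₂) ∧
      (∃ c, ∀ t, H 1 t = c)) :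
    ENNReal.ofReal (2 * Real.pi) ≤ eVariationOn C₁ (Set.Icc 0 1) := by
  by_contra! hshort
  have hrange : C₁ '' Icc 0 1 = range C₁ := by simpa using hper₁.image_Icc one_pos 0
  obtain ⟨H, hH, hH₀, hHper, hHK, hH₁⟩ := hper₁.exists_homotopy_const_of_convex h₁
    (convex_convexHull ℝ (C₁ '' Icc 0 1)) fun t ↦ subset_convexHull ℝ _ (hrange ▸ mem_range_self t)
  refine hlink ⟨H, hH, hH₀, hHper, fun s t ⟨r, hr⟩ ↦ ?_, hH₁⟩
  exact notMem_convexHull_of_eVariationOn_lt zero_le_one h₁.continuousOn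
    (by simpa using (hper₁ 0).symm) (fun t' _ ↦ hr ▸ hdist t' r) hshort (hHK s t)

/-- Original Gehring problem: a closed curve `C₁` keeping distance at least `1` from a
closed curve `C₂` with which it is topologically linked (i.e. `C₁` is not
null-homotopic in the complement of `C₂`) has length at least `2π`. Curves are
parametrized periodically with period `1`. -/
theorem gehring_problem
    (C₁ C₂ : ℝ → EuclideanSpace ℝ (Fin 3))
    (h₁ : Continuous C₁) (h₂ : Continuous C₂)
    (hper₁ : Function.Periodic C₁ 1) (hper₂ : Function.Periodic C₂ 1)
    (hdist : ∀ s t : ℝ, 1 ≤ dist (C₁ s) (C₂ t))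
    (hlink : ¬ ∃ H : ℝ → ℝ → EuclideanSpace ℝ (Fin 3),
      Continuous (Function.uncurry H) ∧
      (∀ t, H 0 t = C₁ t) ∧
      (∀ s, Function.Periodic (H s) 1) ∧
      (∀ s t, H s t ∉ Set.range C₂) ∧
      (∃ c, ∀ t, H 1 t = c)) :
    ENNReal.ofReal (2 * Real.pi) ≤ eVariationOn C₁ (Set.Icc 0 1) :=
  gehring_problem_general C₁ C₂ h₁ hper₁ hdist hlink
end
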